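/- arXiv:2406.15631 — 7 statements merged into one kernel-verified Lean document; each statement's English description precedes it below -/
import Mathlib

section
/- Let 𝔽 be a field and X a countably infinite set. If K is a fully invariant multihomogeneous ideal of the free nonassociative algebra 𝓕(X) over 𝔽, then d(K) ⊆ K for every derivation d of 𝓕(X). -/
noncomputable section

open Function

/-- A (two-sided) ideal of a non-unital non-associative algebra: a submodule closed under
left and right multiplication by arbitrary elements. -/
def IsAlgIdeal (𝔽 : Type*) [Semiring 𝔽] {A : Type*} [NonUnitalNonAssocSemiring A]
    [Module 𝔽 A] (I : Submodule 𝔽 A) : Prop :=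
  ∀ a b : A, b ∈ I → a * b ∈ I ∧ b * a ∈ I

/-- A derivation of a non-unital non-associative algebra. -/
def IsDerivation (𝔽 : Type*) [Semiring 𝔽] {A : Type*} [NonUnitalNonAssocSemiring A]
    [Module 𝔽 A] (d : A →ₗ[𝔽] A) : Prop :=
  ∀ a b : A, d (a * b) = d a * b + a * d b

/-- A subset is fully invariant if every algebra endomorphism maps it into itself. -/
def FullyInvariant (𝔽 : Type*) [Semiring 𝔽] {A : Type*} [NonUnitalNonAssocSemiring A]
    [Module 𝔽 A] (K : Submodule 𝔽 A) : Prop :=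
  ∀ φ : A →ₙₐ[𝔽] A, ∀ x ∈ K, φ x ∈ K

/-- The `n`-th power of a non-unital non-associative algebra: the span of all products
of `n` elements (with all possible bracketings), i.e. `A^n = Σ_{i+j=n} A^i·A^j`, `A^1 = A`. -/
def algPow (𝔽 : Type*) [Semiring 𝔽] (A : Type*) [NonUnitalNonAssocSemiring A] [Module 𝔽 A]
    (n : ℕ) : Submodule 𝔽 A :=
  Submodule.span 𝔽 {x | ∃ w : FreeMagma A, w.length = n ∧ FreeMagma.lift id w = x}

/-- The annihilator `I(A) = {x | xA = Ax = 0}` of a non-unital non-associative algebra. -/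
def annIdeal (𝔽 : Type*) [Semiring 𝔽] (A : Type*) [NonUnitalNonAssocSemiring A]
    [Module 𝔽 A] [SMulCommClass 𝔽 A A] [IsScalarTower 𝔽 A A] : Submodule 𝔽 A where
  carrier := {x | ∀ a : A, x * a = 0 ∧ a * x = 0}
  add_mem' := by
    intro x y hx hy a
    exact ⟨by rw [add_mul, (hx a).1, (hy a).1, add_zero],
           by rw [mul_add, (hx a).2, (hy a).2, add_zero]⟩
  zero_mem' := by intro a; simp
  smul_mem' := by
    intro c x hx a
    exact ⟨by rw [smul_mul_assoc, (hx a).1, smul_zero],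
           by rw [mul_smul_comm, (hx a).2, smul_zero]⟩

/-- The ascending annihilator series: `I₀ = 0`, and `I_{k+1}` is the preimage in `A` of the
annihilator of `A/I_k`. -/
def annSeries (𝔽 : Type*) [Semiring 𝔽] (A : Type*) [NonUnitalNonAssocSemiring A]
    [Module 𝔽 A] [SMulCommClass 𝔽 A A] [IsScalarTower 𝔽 A A] : ℕ → Submodule 𝔽 A
  | 0 => ⊥
  | (k+1) =>
    { carrier := {x | ∀ a : A, x * a ∈ annSeries 𝔽 A k ∧ a * x ∈ annSeries 𝔽 A k}
      add_mem' := by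
        intro x y hx hy a
        exact ⟨by rw [add_mul]; exact Submodule.add_mem _ (hx a).1 (hy a).1,
               by rw [mul_add]; exact Submodule.add_mem _ (hx a).2 (hy a).2⟩
      zero_mem' := by
        intro a
        simp only [zero_mul, mul_zero]
        exact ⟨Submodule.zero_mem _, Submodule.zero_mem _⟩
      smul_mem' := by
        intro c x hx a
        exact ⟨by rw [smul_mul_assoc]; exact Submodule.smul_mem _ _ (hx a).1,
               by rw [mul_smul_comm]; exact Submodule.smul_mem _ _ (hx a).2⟩ }

/-- The multidegree of a nonassociative monomial: the finitely supported function recording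
the number of occurrences of each generator. -/
def multideg {X : Type*} : FreeMagma X → (X →₀ ℕ)
  | FreeMagma.of x => Finsupp.single x 1
  | FreeMagma.mul a b => multideg a + multideg b

/-- The multihomogeneous component of multidegree `α` of an element of the free
nonassociative algebra. -/
def mhComponent {𝔽 : Type*} [Semiring 𝔽] {X : Type*}
    (f : FreeNonUnitalNonAssocAlgebra 𝔽 X) (α : X →₀ ℕ) :
    FreeNonUnitalNonAssocAlgebra 𝔽 X :=
  haveI : DecidablePred fun w : FreeMagma X => multideg w = α := fun _ => Classical.dec _
  MonoidAlgebra.ofCoeff (Finsupp.filter (fun w => multideg w = α) f.coeff)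

/-- A submodule of the free nonassociative algebra is multihomogeneous if it contains all
multihomogeneous components of each of its elements. -/
def Multihomogeneous (𝔽 : Type*) [Semiring 𝔽] {X : Type*}
    (K : Submodule 𝔽 (FreeNonUnitalNonAssocAlgebra 𝔽 X)) : Prop :=
  ∀ f ∈ K, ∀ α : X →₀ ℕ, mhComponent f α ∈ K

/-- `rank_B(V)`: the least cardinality of a subset of `V` generating `V` as a module over
`𝔽[t]`, where `t` acts as the linear operator `B`; equivalently, the least cardinality of a
set whose smallest `B`-invariant subspace is all of `V`. -/
def endRank (𝔽 : Type*) [Semiring 𝔽] {V : Type*} [AddCommMonoid V] [Module 𝔽 V]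
    (B : V →ₗ[𝔽] V) : ℕ :=
  sInf {k | ∃ s : Finset V, s.card = k ∧
    ∀ W : Submodule 𝔽 V, (↑s : Set V) ⊆ W → (∀ x ∈ W, B x ∈ W) → W = ⊤}

/-- For submodules `U, V` of a non-unital non-associative algebra, `mulSub 𝔽 U V` is the
`𝔽`-span of all products `u * v` with `u ∈ U`, `v ∈ V`. -/
def mulSub (𝔽 : Type*) [Semiring 𝔽] {A : Type*} [NonUnitalNonAssocSemiring A] [Module 𝔽 A]
    (U V : Submodule 𝔽 A) : Submodule 𝔽 A :=
  Submodule.span 𝔽 {x | ∃ u ∈ U, ∃ v ∈ V, x = u * v}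

section MyAux

open scoped Classical

variable {𝔽 : Type*} [Field 𝔽] {X : Type*}

/-- The number of letters of a monomial satisfying a predicate `p`. -/
def degP (p : X → Bool) : FreeMagma X → ℕ
  | FreeMagma.of x => if p x then 1 else 0
  | FreeMagma.mul a b => degP p a + degP p b

theorem degP_of (p : X → Bool) (x : X) : degP p (FreeMagma.of x) = if p x then 1 else 0 := rfl

theorem degP_mul (p : X → Bool) (a b : FreeMagma X) :
    degP p (a * b) = degP p a + degP p b := rfl

theorem degP_eq_sum (p : X → Bool) (w : FreeMagma X) :
    degP p w = (multideg w).sum (fun z n => if p z then n else 0) := by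
  induction w with
  | ih1 x =>
    show (if p x then 1 else 0) = (Finsupp.single x 1).sum (fun z n => if p z then n else 0)
    rw [Finsupp.sum_single_index (by simp)]
  | ih2 a b iha ihb =>
    show degP p a + degP p b = (multideg a + multideg b).sum (fun z n => if p z then n else 0)
    rw [Finsupp.sum_add_index' (fun z => by simp) (fun z m n => by split <;> simp), iha, ihb]

/-- Filtering monomials, packaged as an operation on the free algebra. -/
def fltr (P : FreeMagma X → Prop) (g : FreeNonUnitalNonAssocAlgebra 𝔽 X) :
    FreeNonUnitalNonAssocAlgebra 𝔽 X :=
  MonoidAlgebra.ofCoeff (Finsupp.filter P g.coeff)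

theorem fltr_apply (P : FreeMagma X → Prop) (g : FreeNonUnitalNonAssocAlgebra 𝔽 X)
    (w : FreeMagma X) : (fltr P g).coeff w = if P w then g.coeff w else 0 :=
  Finsupp.filter_apply P g.coeff w

theorem fltr_zero (P : FreeMagma X → Prop) : fltr P (0 : FreeNonUnitalNonAssocAlgebra 𝔽 X) = 0 :=
  congrArg MonoidAlgebra.ofCoeff (Finsupp.filter_zero P)

theorem fltr_add (P : FreeMagma X → Prop) (g h : FreeNonUnitalNonAssocAlgebra 𝔽 X) :
    fltr P (g + h) = fltr P g + fltr P h :=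
  congrArg MonoidAlgebra.ofCoeff Finsupp.filter_add

theorem fltr_smul (P : FreeMagma X → Prop) (c : 𝔽) (g : FreeNonUnitalNonAssocAlgebra 𝔽 X) :
    fltr P (c • g) = c • fltr P g :=
  congrArg MonoidAlgebra.ofCoeff Finsupp.filter_smul

theorem fltr_single_of_pos (P : FreeMagma X → Prop) {w : FreeMagma X} {c : 𝔽} (h : P w) :
    fltr P (MonoidAlgebra.single w c) = MonoidAlgebra.single w c :=
  congrArg MonoidAlgebra.ofCoeff (Finsupp.filter_single_of_pos P h)

theorem fltr_single_of_neg (P : FreeMagma X → Prop) {w : FreeMagma X} {c : 𝔽} (h : ¬ P w) :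
    fltr P (MonoidAlgebra.single w c) = 0 :=
  congrArg MonoidAlgebra.ofCoeff (Finsupp.filter_single_of_neg P h)

theorem mhComponent_eq {f : FreeNonUnitalNonAssocAlgebra 𝔽 X} {α : X →₀ ℕ} :
    mhComponent f α = fltr (fun w => multideg w = α) f := by
  unfold mhComponent
  congr!

/-- A filter by a predicate factoring through the multidegree of an element all of whose
multihomogeneous components lie in `K` lies in `K`. -/
theorem filter_mem (K : Submodule 𝔽 (FreeNonUnitalNonAssocAlgebra 𝔽 X))
    (g : FreeNonUnitalNonAssocAlgebra 𝔽 X) (hg : ∀ α, mhComponent g α ∈ K)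
    (Q : FreeMagma X → Prop) (P : (X →₀ ℕ) → Prop) (hQP : ∀ w, Q w ↔ P (multideg w)) :
    fltr Q g ∈ K := by
  have key : fltr Q g
      = ∑ α ∈ (g.coeff.support.image multideg).filter P, mhComponent g α := by
    ext w
    rw [fltr_apply, MonoidAlgebra.coeff_sum, Finsupp.finset_sum_apply]
    simp only [mhComponent_eq, fltr_apply]
    by_cases hw : g.coeff w = 0
    · rw [hw, Finset.sum_eq_zero (fun α _ => by split <;> rfl)]
      split <;> rfl
    · have hsupp : w ∈ g.coeff.support := Finsupp.mem_support_iff.mpr hw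
      by_cases hP : P (multideg w)
      · have hmem : multideg w ∈ Finset.filter P (g.coeff.support.image multideg) :=
          Finset.mem_filter.mpr ⟨Finset.mem_image.mpr ⟨w, hsupp, rfl⟩, hP⟩
        rw [if_pos ((hQP w).mpr hP)]
        have hsum := Finset.sum_eq_single_of_mem
          (s := Finset.filter P (g.coeff.support.image multideg))
          (f := fun α => @ite _ (multideg w = α) (Classical.propDecidable _) (g.coeff w) 0)
          (multideg w) hmem (fun b _ hb => if_neg (fun hh => hb hh.symm))
        rw [hsum]
        exact (if_pos rfl).symm
      · rw [if_neg (fun hQ => hP ((hQP w).mp hQ))]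
        refine (Finset.sum_eq_zero ?_).symm
        intro α hα
        rcases Finset.mem_filter.mp hα with ⟨-, hPα⟩
        by_cases hwα : multideg w = α
        · subst hwα; exact absurd hPα hP
        · exact if_neg hwα
  rw [key]
  exact Submodule.sum_mem _ fun α _ => hg α

variable (p : X → Bool)

/-- Degree-0 part of a product. -/
theorem filter_deg0_mul (g h : FreeNonUnitalNonAssocAlgebra 𝔽 X) :
    fltr (fun w => degP p w = 0) ((g * h : FreeNonUnitalNonAssocAlgebra 𝔽 X)) =
      ((fltr (fun w => degP p w = 0) g : FreeNonUnitalNonAssocAlgebra 𝔽 X) *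
        (fltr (fun w => degP p w = 0) h : FreeNonUnitalNonAssocAlgebra 𝔽 X) :
        FreeNonUnitalNonAssocAlgebra 𝔽 X) := by
  induction g using MonoidAlgebra.induction_linear with
  | zero => simp [fltr_zero]
  | add f₁ f₂ h₁ h₂ => rw [add_mul, fltr_add, h₁, h₂, fltr_add, add_mul]
  | single u a =>
    induction h using MonoidAlgebra.induction_linear with
    | zero => simp [fltr_zero]
    | add f₁ f₂ h₁ h₂ => rw [mul_add, fltr_add, h₁, h₂, fltr_add, mul_add]
    | single v b =>
      rw [MonoidAlgebra.single_mul_single]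
      by_cases hu : degP p u = 0 <;> by_cases hv : degP p v = 0
      · rw [fltr_single_of_pos (fun w => degP p w = 0)
            (show degP p (u * v) = 0 by rw [degP_mul, hu, hv]),
          fltr_single_of_pos (fun w => degP p w = 0) hu,
          fltr_single_of_pos (fun w => degP p w = 0) hv]
        exact (MonoidAlgebra.single_mul_single ..).symm
      · rw [fltr_single_of_neg (fun w => degP p w = 0)
            (show ¬ degP p (u * v) = 0 by rw [degP_mul]; omega),
          fltr_single_of_neg (fun w => degP p w = 0) hv]
        simp
      · rw [fltr_single_of_neg (fun w => degP p w = 0)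
            (show ¬ degP p (u * v) = 0 by rw [degP_mul]; omega),
          fltr_single_of_neg (fun w => degP p w = 0) hu]
        simp
      · rw [fltr_single_of_neg (fun w => degP p w = 0)
            (show ¬ degP p (u * v) = 0 by rw [degP_mul]; omega),
          fltr_single_of_neg (fun w => degP p w = 0) hu]
        simp

/-- Degree-1 part of a product. -/
theorem filter_deg1_mul (g h : FreeNonUnitalNonAssocAlgebra 𝔽 X) :
    fltr (fun w => degP p w = 1) ((g * h : FreeNonUnitalNonAssocAlgebra 𝔽 X)) =
      ((fltr (fun w => degP p w = 1) g : FreeNonUnitalNonAssocAlgebra 𝔽 X) *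
        (fltr (fun w => degP p w = 0) h : FreeNonUnitalNonAssocAlgebra 𝔽 X) :
        FreeNonUnitalNonAssocAlgebra 𝔽 X) +
      ((fltr (fun w => degP p w = 0) g : FreeNonUnitalNonAssocAlgebra 𝔽 X) *
        (fltr (fun w => degP p w = 1) h : FreeNonUnitalNonAssocAlgebra 𝔽 X) :
        FreeNonUnitalNonAssocAlgebra 𝔽 X) := by
  induction g using MonoidAlgebra.induction_linear with
  | zero => simp [fltr_zero]
  | add f₁ f₂ h₁ h₂ =>
    rw [add_mul, fltr_add, h₁, h₂, fltr_add, fltr_add,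
      add_mul, add_mul]
    abel
  | single u a =>
    induction h using MonoidAlgebra.induction_linear with
    | zero => simp [fltr_zero]
    | add f₁ f₂ h₁ h₂ =>
      rw [mul_add, fltr_add, h₁, h₂, fltr_add, fltr_add,
        mul_add, mul_add]
      abel
    | single v b =>
      rw [MonoidAlgebra.single_mul_single]
      rcases Nat.eq_zero_or_pos (degP p u) with hu | hu <;>
        rcases Nat.eq_zero_or_pos (degP p v) with hv | hv
      · rw [fltr_single_of_neg (fun w => degP p w = 1)
            (show ¬ degP p (u * v) = 1 by rw [degP_mul]; omega),
          fltr_single_of_neg (fun w => degP p w = 1)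
            (show ¬ degP p u = 1 by omega),
          fltr_single_of_neg (fun w => degP p w = 1)
            (show ¬ degP p v = 1 by omega)]
        simp
      · by_cases hv1 : degP p v = 1
        · rw [fltr_single_of_pos (fun w => degP p w = 1)
              (show degP p (u * v) = 1 by rw [degP_mul]; omega),
            fltr_single_of_neg (fun w => degP p w = 1)
              (show ¬ degP p u = 1 by omega),
            fltr_single_of_pos (fun w => degP p w = 0) hu,
            fltr_single_of_pos (fun w => degP p w = 1) hv1]
          simp only [zero_mul, zero_add]
          exact (MonoidAlgebra.single_mul_single ..).symm
        · rw [fltr_single_of_neg (fun w => degP p w = 1)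
              (show ¬ degP p (u * v) = 1 by rw [degP_mul]; omega),
            fltr_single_of_neg (fun w => degP p w = 1)
              (show ¬ degP p u = 1 by omega),
            fltr_single_of_neg (fun w => degP p w = 1) hv1]
          simp
      · by_cases hu1 : degP p u = 1
        · rw [fltr_single_of_pos (fun w => degP p w = 1)
              (show degP p (u * v) = 1 by rw [degP_mul]; omega),
            fltr_single_of_pos (fun w => degP p w = 1) hu1,
            fltr_single_of_pos (fun w => degP p w = 0) hv,
            fltr_single_of_neg (fun w => degP p w = 0)
              (show ¬ degP p u = 0 by omega)]
          simp only [zero_mul, add_zero]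
          exact (MonoidAlgebra.single_mul_single ..).symm
        · rw [fltr_single_of_neg (fun w => degP p w = 1)
              (show ¬ degP p (u * v) = 1 by rw [degP_mul]; omega),
            fltr_single_of_neg (fun w => degP p w = 1) hu1,
            fltr_single_of_neg (fun w => degP p w = 0)
              (show ¬ degP p u = 0 by omega)]
          simp
      · rw [fltr_single_of_neg (fun w => degP p w = 1)
            (show ¬ degP p (u * v) = 1 by rw [degP_mul]; omega),
          fltr_single_of_neg (fun w => degP p w = 0)
            (show ¬ degP p u = 0 by omega),
          fltr_single_of_neg (fun w => degP p w = 0)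
            (show ¬ degP p v = 0 by omega)]
        simp

variable (e : X ≃ X ⊕ X)
    (d : FreeNonUnitalNonAssocAlgebra 𝔽 X →ₗ[𝔽] FreeNonUnitalNonAssocAlgebra 𝔽 X)

/-- The substitution `x ↦ x₁ + x₂` into two disjoint copies of the variables. -/
def splitHom : FreeNonUnitalNonAssocAlgebra 𝔽 X →ₙₐ[𝔽] FreeNonUnitalNonAssocAlgebra 𝔽 X :=
  FreeNonUnitalNonAssocAlgebra.lift 𝔽 fun x =>
    FreeNonUnitalNonAssocAlgebra.of 𝔽 (e.symm (Sum.inl x)) +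
    FreeNonUnitalNonAssocAlgebra.of 𝔽 (e.symm (Sum.inr x))

/-- The substitution `x₁ ↦ x`, `x₂ ↦ d x`. -/
def collapseHom : FreeNonUnitalNonAssocAlgebra 𝔽 X →ₙₐ[𝔽] FreeNonUnitalNonAssocAlgebra 𝔽 X :=
  FreeNonUnitalNonAssocAlgebra.lift 𝔽 fun z =>
    Sum.elim (fun x => FreeNonUnitalNonAssocAlgebra.of 𝔽 x)
      (fun x => d (FreeNonUnitalNonAssocAlgebra.of 𝔽 x)) (e z)

theorem key_monomial (hd : IsDerivation 𝔽 d) (w : FreeMagma X) :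
    collapseHom e d (fltr (fun w' => degP (fun z => (e z).isRight) w' = 0)
        (splitHom e (MonoidAlgebra.single w (1 : 𝔽)))) = MonoidAlgebra.single w 1 ∧
    collapseHom e d (fltr (fun w' => degP (fun z => (e z).isRight) w' = 1)
        (splitHom e (MonoidAlgebra.single w (1 : 𝔽)))) = d (MonoidAlgebra.single w 1) := by
  set p : X → Bool := fun z => (e z).isRight with hp
  induction w using FreeMagma.recOnMul with
  | ih1 x =>
    have hof : (MonoidAlgebra.single (FreeMagma.of x) (1 : 𝔽) :
        FreeNonUnitalNonAssocAlgebra 𝔽 X) = FreeNonUnitalNonAssocAlgebra.of 𝔽 x := rfl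
    have hsplit : splitHom e (MonoidAlgebra.single (FreeMagma.of x) (1 : 𝔽)) =
        MonoidAlgebra.single (FreeMagma.of (e.symm (Sum.inl x))) 1 +
        MonoidAlgebra.single (FreeMagma.of (e.symm (Sum.inr x))) 1 := by
      rw [hof]
      exact FreeNonUnitalNonAssocAlgebra.lift_of_apply 𝔽 _ x
    have hd1 : degP p (FreeMagma.of (e.symm (Sum.inl x))) = 0 := by
      rw [degP_of, hp]; simp
    have hd2 : degP p (FreeMagma.of (e.symm (Sum.inr x))) = 1 := by
      rw [degP_of, hp]; simp
    have hc1 : collapseHom e d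
        (MonoidAlgebra.single (FreeMagma.of (e.symm (Sum.inl x))) (1 : 𝔽)) =
        MonoidAlgebra.single (FreeMagma.of x) 1 := by
      have := FreeNonUnitalNonAssocAlgebra.lift_of_apply 𝔽
        (fun z => Sum.elim (fun x => FreeNonUnitalNonAssocAlgebra.of 𝔽 x)
          (fun x => d (FreeNonUnitalNonAssocAlgebra.of 𝔽 x)) (e z)) (e.symm (Sum.inl x))
      rw [collapseHom]
      rw [show (MonoidAlgebra.single (FreeMagma.of (e.symm (Sum.inl x))) (1 : 𝔽) :
        FreeNonUnitalNonAssocAlgebra 𝔽 X) = FreeNonUnitalNonAssocAlgebra.of 𝔽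
          (e.symm (Sum.inl x)) from rfl, this, e.apply_symm_apply]
      rfl
    have hc2 : collapseHom e d
        (MonoidAlgebra.single (FreeMagma.of (e.symm (Sum.inr x))) (1 : 𝔽)) =
        d (MonoidAlgebra.single (FreeMagma.of x) 1) := by
      have := FreeNonUnitalNonAssocAlgebra.lift_of_apply 𝔽
        (fun z => Sum.elim (fun x => FreeNonUnitalNonAssocAlgebra.of 𝔽 x)
          (fun x => d (FreeNonUnitalNonAssocAlgebra.of 𝔽 x)) (e z)) (e.symm (Sum.inr x))
      rw [collapseHom]
      rw [show (MonoidAlgebra.single (FreeMagma.of (e.symm (Sum.inr x))) (1 : 𝔽) :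
        FreeNonUnitalNonAssocAlgebra 𝔽 X) = FreeNonUnitalNonAssocAlgebra.of 𝔽
          (e.symm (Sum.inr x)) from rfl, this, e.apply_symm_apply]
      rw [hof]
      rfl
    constructor
    · rw [hsplit, fltr_add, fltr_single_of_pos (fun w' => degP p w' = 0) hd1,
        fltr_single_of_neg (fun w' => degP p w' = 0) (by intro hcon; exact absurd (hd2.symm.trans hcon) one_ne_zero), add_zero, hc1]
    · rw [hsplit, fltr_add, fltr_single_of_neg (fun w' => degP p w' = 1) (by intro hcon; exact absurd (hd1.symm.trans hcon) zero_ne_one),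
        fltr_single_of_pos (fun w' => degP p w' = 1) hd2, zero_add, hc2]
  | ih2 a b iha ihb =>
    have hsingle : (MonoidAlgebra.single (a * b) (1 : 𝔽) :
        FreeNonUnitalNonAssocAlgebra 𝔽 X) =
        MonoidAlgebra.single a 1 * MonoidAlgebra.single b 1 := by
      rw [MonoidAlgebra.single_mul_single, one_mul]
    have hmul : splitHom e (MonoidAlgebra.single (a * b) (1 : 𝔽)) =
        splitHom e (MonoidAlgebra.single a 1) * splitHom e (MonoidAlgebra.single b 1) := by
      rw [hsingle, map_mul]
    constructor
    · rw [hmul, filter_deg0_mul, map_mul, iha.1, ihb.1, hsingle]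
    · rw [hmul, filter_deg1_mul, map_add, map_mul, map_mul, iha.1, iha.2, ihb.1, ihb.2,
        hsingle, hd]

theorem deriv_eq_fltr (hd : IsDerivation 𝔽 d) (f : FreeNonUnitalNonAssocAlgebra 𝔽 X) :
    d f = collapseHom e d (fltr
      (fun w' => degP (fun z => (e z).isRight) w' = 1) (splitHom e f)) := by
  induction f using MonoidAlgebra.induction_linear with
  | zero => simp [fltr_zero]
  | add f₁ f₂ h₁ h₂ => rw [map_add, h₁, h₂, map_add, fltr_add, map_add]
  | single w b =>
    have hb : (MonoidAlgebra.single w b : FreeNonUnitalNonAssocAlgebra 𝔽 X) =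
        b • MonoidAlgebra.single w 1 := by
      rw [MonoidAlgebra.smul_single, smul_eq_mul, mul_one]
    rw [hb, map_smul, map_smul, fltr_smul, map_smul,
      (key_monomial e d hd w).2]

end MyAux

/-- If `X` is countably infinite and `K` is a fully invariant multihomogeneous
ideal of the free nonassociative algebra `𝓕(X)`, then `d(K) ⊆ K` for every derivation `d`. -/
theorem statement3 (𝔽 : Type*) [Field 𝔽] (X : Type*) [Countable X] [Infinite X]
    (K : Submodule 𝔽 (FreeNonUnitalNonAssocAlgebra 𝔽 X))
    (hideal : IsAlgIdeal 𝔽 K) (hfi : FullyInvariant 𝔽 K) (hmh : Multihomogeneous 𝔽 K)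
    (d : FreeNonUnitalNonAssocAlgebra 𝔽 X →ₗ[𝔽] FreeNonUnitalNonAssocAlgebra 𝔽 X)
    (hd : IsDerivation 𝔽 d) :
    ∀ f ∈ K, d f ∈ K := by
  classical
  obtain ⟨h⟩ := nonempty_denumerable X
  let e : X ≃ X ⊕ X := (Denumerable.eqv X).trans (Denumerable.eqv (X ⊕ X)).symm
  intro f hf
  rw [deriv_eq_fltr e d hd f]
  apply hfi
  apply filter_mem K _ (fun α => hmh _ (hfi (splitHom e) f hf) α) _
    (fun α => α.sum (fun z n => if (e z).isRight then n else 0) = 1)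
  intro w
  rw [degP_eq_sum]
end
end

section
/- Let 𝔽 be a field, c ≥ 1, and F = 𝓕_n/K a relatively free c-step nilpotent algebra of rank n over 𝔽 (so K is a fully invariant ideal of the free nonassociative algebra 𝓕_n on n generators with 𝓕_n^{c+1} ⊆ K). Let α be an 𝔽-algebra endomorphism of F. Since α(F²) ⊆ F², α induces an 𝔽-linear endomorphism of F/F²; if this induced map is bijective, then α is an automorphism of F. -/
noncomputable section

open Function

section Aux
variable {𝔽 : Type*} [Semiring 𝔽] {A : Type*} [NonUnitalNonAssocSemiring A] [Module 𝔽 A]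
  [SMulCommClass 𝔽 A A] [IsScalarTower 𝔽 A A]

omit [SMulCommClass 𝔽 A A] [IsScalarTower 𝔽 A A] in
lemma lift_word_mem_algPow (w : FreeMagma A) : FreeMagma.lift id w ∈ algPow 𝔽 A w.length :=
  Submodule.subset_span ⟨w, rfl, rfl⟩

omit [SMulCommClass 𝔽 A A] [IsScalarTower 𝔽 A A] in
lemma mem_algPow_one (a : A) : a ∈ algPow 𝔽 A 1 :=
  Submodule.subset_span ⟨FreeMagma.of a, rfl, rfl⟩

lemma algPow_mul_mem {i j : ℕ} {a b : A} (ha : a ∈ algPow 𝔽 A i) (hb : b ∈ algPow 𝔽 A j) :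
    a * b ∈ algPow 𝔽 A (i + j) := by
  induction ha using Submodule.span_induction with
  | mem x hx =>
    induction hb using Submodule.span_induction with
    | mem y hy =>
      obtain ⟨w1, h1, rfl⟩ := hx
      obtain ⟨w2, h2, rfl⟩ := hy
      refine Submodule.subset_span ⟨w1 * w2, ?_, ?_⟩
      · simp [FreeMagma.length, h1, h2]
      · simp [map_mul]
    | zero => rw [mul_zero]; exact Submodule.zero_mem _
    | add y z _ _ hy hz => rw [mul_add]; exact Submodule.add_mem _ hy hz
    | smul r y _ hy => rw [mul_smul_comm]; exact Submodule.smul_mem _ _ hy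
  | zero => rw [zero_mul]; exact Submodule.zero_mem _
  | add x y _ _ hx hy => rw [add_mul]; exact Submodule.add_mem _ hx hy
  | smul r x _ hx => rw [smul_mul_assoc]; exact Submodule.smul_mem _ _ hx

lemma lift_word_mem_algPow_of_le (w : FreeMagma A) :
    ∀ k, 1 ≤ k → k ≤ w.length → FreeMagma.lift id w ∈ algPow 𝔽 A k := by
  induction w with
  | ih1 a =>
    intro k h1 h2
    simp only [FreeMagma.length] at h2
    interval_cases k
    exact mem_algPow_one a
  | ih2 w1 w2 ih1 ih2 =>
    intro k h1 h2
    rcases eq_or_lt_of_le h1 with h1' | h1'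
    · rw [← h1']; exact mem_algPow_one _
    · have hi : 1 ≤ w1.length := w1.length_pos
      have hj : 1 ≤ w2.length := w2.length_pos
      simp only [FreeMagma.length] at h2
      set k1 := min (k - 1) w1.length with hk1
      set k2 := k - k1 with hk2
      have hk1a : 1 ≤ k1 := le_min (by omega) hi
      have hk1b : k1 ≤ w1.length := min_le_right _ _
      have hk2a : 1 ≤ k2 := by omega
      have hk2b : k2 ≤ w2.length := by
        rcases min_cases (k - 1) w1.length with ⟨h, _⟩ | ⟨h, _⟩ <;> omega
      have : k = k1 + k2 := by omega
      rw [this, map_mul]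
      exact algPow_mul_mem (ih1 k1 hk1a hk1b) (ih2 k2 hk2a hk2b)

lemma algPow_le_algPow {k m : ℕ} (h1 : 1 ≤ k) (h2 : k ≤ m) : algPow 𝔽 A m ≤ algPow 𝔽 A k := by
  rw [algPow, Submodule.span_le]
  rintro x ⟨w, hw, rfl⟩
  exact lift_word_mem_algPow_of_le w k h1 (hw ▸ h2)

end Aux

lemma freeMagma_length_map {β γ : Type*} (f : β → γ) (w : FreeMagma β) :
    (FreeMagma.map f w).length = w.length := by
  induction w with
  | ih1 x => rfl
  | ih2 w1 w2 ih1 ih2 => rw [map_mul]; simp only [FreeMagma.length]; omega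

lemma freeMagma_length_eq_finite {X : Type*} [Finite X] (k : ℕ) :
    {w : FreeMagma X | w.length = k}.Finite := by
  induction k using Nat.strong_induction_on with
  | _ k ih =>
    match k with
    | 0 =>
      convert Set.finite_empty
      ext w
      simp [w.length_pos.ne']
    | 1 =>
      apply (Set.finite_range (FreeMagma.of : X → FreeMagma X)).subset
      rintro (⟨x⟩ | ⟨w1, w2⟩) hw
      · exact ⟨x, rfl⟩
      · simp only [Set.mem_setOf_eq, FreeMagma.length] at hw
        have := w1.length_pos; have := w2.length_pos; omega
    | (k+2) =>
      apply Set.Finite.subset (Set.Finite.biUnion (Set.finite_Icc 1 (k+1))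
        (fun i hi => Set.Finite.image2 (· * ·)
          (ih i (by simp only [Set.mem_Icc] at hi; omega))
          (ih (k + 2 - i) (by simp only [Set.mem_Icc] at hi; omega))))
      rintro (⟨x⟩ | ⟨w1, w2⟩) hw
      · simp only [Set.mem_setOf_eq, FreeMagma.length] at hw; omega
      · simp only [Set.mem_setOf_eq, FreeMagma.length] at hw
        have h1 := w1.length_pos; have h2 := w2.length_pos
        exact Set.mem_biUnion (show w1.length ∈ Set.Icc 1 (k+1) by
            simp only [Set.mem_Icc]; omega)
          (Set.mem_image2_of_mem rfl (by simp only [Set.mem_setOf_eq]; omega))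


/-- Let `F = 𝓕_n/K` be a relatively free `c`-step nilpotent algebra of rank `n`
(presented by a surjection `π` with fully invariant kernel `K ⊇ 𝓕_n^{c+1}`), and `α` an
endomorphism of `F`.  If the endomorphism induced by `α` on `F/F²` is bijective, then `α`
is an automorphism. -/
theorem statement6 (𝔽 : Type*) [Field 𝔽] (n c : ℕ) (hc : 1 ≤ c)
    (K : Submodule 𝔽 (FreeNonUnitalNonAssocAlgebra 𝔽 (Fin n)))
    (hKideal : IsAlgIdeal 𝔽 K) (hKfi : FullyInvariant 𝔽 K)
    (hKnil : algPow 𝔽 (FreeNonUnitalNonAssocAlgebra 𝔽 (Fin n)) (c + 1) ≤ K)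
    (F : Type*) [NonUnitalNonAssocRing F] [Module 𝔽 F]
    [SMulCommClass 𝔽 F F] [IsScalarTower 𝔽 F F]
    (π : FreeNonUnitalNonAssocAlgebra 𝔽 (Fin n) →ₙₐ[𝔽] F)
    (hπ : Function.Surjective π) (hπker : ∀ x, π x = 0 ↔ x ∈ K)
    (α : F →ₙₐ[𝔽] F)
    (hinv : algPow 𝔽 F 2 ≤ (algPow 𝔽 F 2).comap (α : F →ₗ[𝔽] F))
    (hbij : Function.Bijective
      (Submodule.mapQ (algPow 𝔽 F 2) (algPow 𝔽 F 2) (α : F →ₗ[𝔽] F) hinv)) :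
    Function.Bijective α := by
  classical
  set R : Submodule 𝔽 F := LinearMap.range (α : F →ₗ[𝔽] F) with hRdef
  have hRmul : ∀ a ∈ R, ∀ b ∈ R, a * b ∈ R := by
    rintro a ⟨x, rfl⟩ b ⟨y, rfl⟩
    exact ⟨x * y, map_mul α x y⟩
  have htop2 : (⊤ : Submodule 𝔽 F) ≤ R ⊔ algPow 𝔽 F 2 := by
    intro x _
    obtain ⟨q, hq⟩ := hbij.2 (Submodule.Quotient.mk x)
    obtain ⟨y, rfl⟩ := Submodule.Quotient.mk_surjective _ q
    rw [Submodule.mapQ_apply] at hq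
    have hxy : (α : F →ₗ[𝔽] F) y - x ∈ algPow 𝔽 F 2 := (Submodule.Quotient.eq _).mp hq
    have hx : x = (α : F →ₗ[𝔽] F) y + -((α : F →ₗ[𝔽] F) y - x) := by abel
    rw [hx]
    exact Submodule.add_mem _ (Submodule.mem_sup_left ⟨y, rfl⟩)
      (Submodule.mem_sup_right (Submodule.neg_mem _ hxy))
  have hkey : ∀ w : FreeMagma F, FreeMagma.lift id w ∈ R ⊔ algPow 𝔽 F (w.length + 1) := by
    intro w
    induction w with
    | ih1 a => exact htop2 Submodule.mem_top
    | ih2 w1 w2 ih1 ih2 =>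
      have hi := w1.length_pos
      have hj := w2.length_pos
      obtain ⟨r1, hr1, p1, hp1, hsum1⟩ := Submodule.mem_sup.mp ih1
      obtain ⟨r2, hr2, p2, hp2, hsum2⟩ := Submodule.mem_sup.mp ih2
      have hr1p : r1 ∈ algPow 𝔽 F w1.length := by
        have h1 : r1 = FreeMagma.lift id w1 - p1 := by rw [← hsum1]; abel
        rw [h1]
        exact Submodule.sub_mem _ (lift_word_mem_algPow w1)
          (algPow_le_algPow hi (Nat.le_succ _) hp1)
      have hr2p : r2 ∈ algPow 𝔽 F w2.length := by
        have h2 : r2 = FreeMagma.lift id w2 - p2 := by rw [← hsum2]; abel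
        rw [h2]
        exact Submodule.sub_mem _ (lift_word_mem_algPow w2)
          (algPow_le_algPow hj (Nat.le_succ _) hp2)
      have e : FreeMagma.lift id (w1 * w2) = r1 * r2 + (r1 * p2 + p1 * r2 + p1 * p2) := by
        rw [map_mul, ← hsum1, ← hsum2, add_mul, mul_add, mul_add]
        abel
      have hlen : (w1 * w2).length = w1.length + w2.length := rfl
      rw [hlen, e]
      refine Submodule.add_mem _ (Submodule.mem_sup_left (hRmul _ hr1 _ hr2))
        (Submodule.mem_sup_right ?_)
      have h1 : r1 * p2 ∈ algPow 𝔽 F (w1.length + (w2.length + 1)) := algPow_mul_mem hr1p hp2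
      have h2 : p1 * r2 ∈ algPow 𝔽 F ((w1.length + 1) + w2.length) := algPow_mul_mem hp1 hr2p
      have h3 : p1 * p2 ∈ algPow 𝔽 F ((w1.length + 1) + (w2.length + 1)) :=
        algPow_mul_mem hp1 hp2
      have e1 : w1.length + (w2.length + 1) = w1.length + w2.length + 1 := by omega
      have e2 : (w1.length + 1) + w2.length = w1.length + w2.length + 1 := by omega
      rw [e1] at h1; rw [e2] at h2
      exact Submodule.add_mem _ (Submodule.add_mem _ h1 h2)
        (algPow_le_algPow (by omega) (by omega) h3)
  have hstep : ∀ k, 1 ≤ k → algPow 𝔽 F k ≤ R ⊔ algPow 𝔽 F (k + 1) := by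
    intro k hk
    rw [algPow, Submodule.span_le]
    rintro x ⟨w, hw, rfl⟩
    have := hkey w
    rwa [hw] at this
  have hchain : ∀ k, 2 ≤ k → (⊤ : Submodule 𝔽 F) ≤ R ⊔ algPow 𝔽 F k := by
    intro k hk
    induction k, hk using Nat.le_induction with
    | base => exact htop2
    | succ k hk ih =>
      refine ih.trans (sup_le le_sup_left ((hstep k (by omega)).trans (sup_le ?_ ?_)))
      · exact le_sup_left
      · exact le_sup_right
  -- nilpotency of F
  have hFnil : algPow 𝔽 F (c + 1) = ⊥ := by
    rw [eq_bot_iff, algPow, Submodule.span_le]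
    rintro x ⟨w, hw, rfl⟩
    set s := surjInv hπ with hs
    have hcomm : ∀ w : FreeMagma F,
        π (FreeMagma.lift id (FreeMagma.map s w)) = FreeMagma.lift id w := by
      intro w
      induction w with
      | ih1 a => exact surjInv_eq hπ a
      | ih2 w1 w2 ih1 ih2 => rw [map_mul, map_mul, map_mul, map_mul, ih1, ih2]
    have hmem : FreeMagma.lift id (FreeMagma.map s w) ∈ K := by
      apply hKnil
      have := lift_word_mem_algPow (𝔽 := 𝔽) (FreeMagma.map s w)
      rwa [freeMagma_length_map, hw] at this
    simp only [SetLike.mem_coe, Submodule.mem_bot]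
    rw [← hcomm w]
    exact (hπker _).mpr hmem
  -- surjectivity
  have hRtop : R = ⊤ := by
    have h := hchain (c + 1) (by omega)
    rw [hFnil, sup_bot_eq] at h
    exact eq_top_iff.mpr h
  have hsurj : Surjective α := by
    intro x
    have hx : x ∈ R := hRtop ▸ Submodule.mem_top
    obtain ⟨y, hy⟩ := hx
    exact ⟨y, hy⟩
  -- finite-dimensionality
  have hsingle : ∀ w : FreeMagma (Fin n),
      FreeMagma.lift id (FreeMagma.map (FreeNonUnitalNonAssocAlgebra.of 𝔽) w)
        = MonoidAlgebra.single w (1 : 𝔽) := by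
    intro w
    induction w with
    | ih1 x => rfl
    | ih2 w1 w2 ih1 ih2 =>
      rw [map_mul, map_mul, ih1, ih2, MonoidAlgebra.single_mul_single, one_mul]
  have hsingle_mem : ∀ w : FreeMagma (Fin n), c + 1 ≤ w.length →
      MonoidAlgebra.single w (1 : 𝔽) ∈ K := by
    intro w hw
    apply hKnil
    apply algPow_le_algPow (by omega) hw
    have := lift_word_mem_algPow (𝔽 := 𝔽) (FreeMagma.map (FreeNonUnitalNonAssocAlgebra.of 𝔽) w)
    rwa [freeMagma_length_map, hsingle w] at this
  have hspan : ∀ f : FreeNonUnitalNonAssocAlgebra 𝔽 (Fin n),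
      f ∈ Submodule.span 𝔽
        (Set.range fun w : FreeMagma (Fin n) => MonoidAlgebra.single w (1 : 𝔽)) := by
    intro f
    induction f using MonoidAlgebra.induction with
    | zero => exact Submodule.zero_mem _
    | single_add a b f _ _ ih =>
      refine Submodule.add_mem _ ?_ ih
      have hab : (MonoidAlgebra.single a b : FreeNonUnitalNonAssocAlgebra 𝔽 (Fin n))
          = b • MonoidAlgebra.single a (1 : 𝔽) := by
        rw [MonoidAlgebra.smul_single', mul_one]
      rw [hab]
      exact Submodule.smul_mem _ _ (Submodule.subset_span ⟨a, rfl⟩)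
  have hfin : Module.Finite 𝔽 F := by
    rw [Module.finite_def, Submodule.fg_def]
    refine ⟨π '' ((fun w => MonoidAlgebra.single w (1 : 𝔽)) ''
        {w : FreeMagma (Fin n) | w.length ≤ c}), ?_, ?_⟩
    · refine Set.Finite.image _ (Set.Finite.image _ ?_)
      refine Set.Finite.subset ((Set.finite_Iic c).biUnion
        (fun k _ => freeMagma_length_eq_finite k)) ?_
      intro w hw
      exact Set.mem_biUnion (Set.mem_Iic.mpr hw) rfl
    · refine le_antisymm le_top ?_
      intro x _
      obtain ⟨f, rfl⟩ := hπ x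
      have hf : f ∈ Submodule.span 𝔽
          (Set.range fun w : FreeMagma (Fin n) => MonoidAlgebra.single w (1 : 𝔽)) :=
        hspan f
      have hx : π f ∈ Submodule.map (π : FreeNonUnitalNonAssocAlgebra 𝔽 (Fin n) →ₗ[𝔽] F) (Submodule.span 𝔽
          (Set.range fun w : FreeMagma (Fin n) => MonoidAlgebra.single w (1 : 𝔽))) :=
        ⟨f, hf, rfl⟩
      rw [Submodule.map_span] at hx
      refine Submodule.span_le.mpr ?_ hx
      rintro y ⟨_, ⟨w, rfl⟩, rfl⟩
      by_cases hw : w.length ≤ c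
      · exact Submodule.subset_span ⟨_, ⟨w, hw, rfl⟩, rfl⟩
      · have h0 : π (MonoidAlgebra.single w (1 : 𝔽)) = 0 :=
          (hπker _).mpr (hsingle_mem w (by omega))
        exact (show (π : FreeNonUnitalNonAssocAlgebra 𝔽 (Fin n) →ₗ[𝔽] F) (MonoidAlgebra.single w (1 : 𝔽)) = 0 from h0) ▸
          Submodule.zero_mem _
  have : FiniteDimensional 𝔽 F := hfin
  have hinj : Injective α :=
    (LinearMap.injective_iff_surjective (f := (α : F →ₗ[𝔽] F))).mpr hsurj
  exact ⟨hinj, hsurj⟩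
end
end

section
/- Let 𝔽 be a field, c ≥ 1, and F = 𝓕_n/K₀ a relatively free c-step nilpotent algebra of finite rank n over 𝔽 (K₀ a fully invariant ideal of the free nonassociative algebra on n generators containing 𝓕_n^{c+1}). For ideals K and L of F, the quotient algebras F/K and F/L are isomorphic as 𝔽-algebras if and only if there exists an 𝔽-algebra automorphism δ of F with δ(K) = L. -/
noncomputable section

open Function

abbrev NonUnitalAlgHom.toLinearMap {R A B : Type*} [Semiring R] [NonUnitalNonAssocSemiring A]
    [Module R A] [NonUnitalNonAssocSemiring B] [Module R B] (φ : A →ₙₐ[R] B) : A →ₗ[R] B :=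
  (φ : A →ₗ[R] B)

set_option linter.unusedSectionVars false
namespace St8Aux

lemma length_map {α β : Type*} (g : α → β) (w : FreeMagma α) :
    (FreeMagma.map g w).length = w.length := by
  induction w with
  | ih1 x => rfl
  | ih2 a b iha ihb => rw [map_mul]; simp [FreeMagma.length, iha, ihb]

lemma mulHom_lift {α β γ F : Type*} [Mul β] [Mul γ] [FunLike F β γ] [MulHomClass F β γ]
    (p : F) (g : α → β)
    (w : FreeMagma α) : p (FreeMagma.lift g w) = FreeMagma.lift (⇑p ∘ g) w := by
  induction w with
  | ih1 x => simp
  | ih2 a b iha ihb => rw [map_mul, map_mul, iha, ihb]; exact (map_mul _ a b).symm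

lemma lift_map {α β γ : Type*} [Mul γ] (g : β → γ) (h : α → β) (w : FreeMagma α) :
    FreeMagma.lift g (FreeMagma.map h w) = FreeMagma.lift (g ∘ h) w := by
  induction w with
  | ih1 x => simp [FreeMagma.map_of]
  | ih2 a b iha ihb => rw [map_mul, map_mul, map_mul, iha, ihb]

variable {𝔽 : Type*} [Field 𝔽] {A B : Type*}
  [NonUnitalNonAssocSemiring A] [Module 𝔽 A] [SMulCommClass 𝔽 A A] [IsScalarTower 𝔽 A A]
  [NonUnitalNonAssocSemiring B] [Module 𝔽 B] [SMulCommClass 𝔽 B B] [IsScalarTower 𝔽 B B]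

lemma gen_mem_algPow (w : FreeMagma A) : FreeMagma.lift id w ∈ algPow 𝔽 A w.length :=
  Submodule.subset_span ⟨w, rfl, rfl⟩

lemma algPow_one : algPow 𝔽 A 1 = ⊤ := by
  rw [eq_top_iff]
  intro a _
  exact Submodule.subset_span ⟨FreeMagma.of a, rfl, rfl⟩

lemma algPow_zero : algPow 𝔽 A 0 = ⊥ := by
  rw [eq_bot_iff]
  apply Submodule.span_le.mpr
  rintro x ⟨w, hw, -⟩
  exact absurd hw (by have := w.length_pos; omega)

lemma mul_mem_algPow {i j : ℕ} {a b : A} (ha : a ∈ algPow 𝔽 A i) (hb : b ∈ algPow 𝔽 A j) :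
    a * b ∈ algPow 𝔽 A (i + j) := by
  induction hb using Submodule.span_induction with
  | mem y hy =>
    obtain ⟨wb, hwb, rfl⟩ := hy
    induction ha using Submodule.span_induction with
    | mem x hx =>
      obtain ⟨wa, hwa, rfl⟩ := hx
      have : FreeMagma.lift id wa * FreeMagma.lift id wb
          = FreeMagma.lift (id : A → A) (wa * wb) := by rw [map_mul]
      rw [this, ← hwa, ← hwb]
      exact gen_mem_algPow (wa * wb)
    | zero => rw [zero_mul]; exact Submodule.zero_mem _
    | add x y _ _ hx hy => rw [add_mul]; exact Submodule.add_mem _ hx hy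
    | smul c x _ hx => rw [smul_mul_assoc]; exact Submodule.smul_mem _ _ hx
  | zero => rw [mul_zero]; exact Submodule.zero_mem _
  | add x y _ _ hx hy => rw [mul_add]; exact Submodule.add_mem _ hx hy
  | smul c x _ hx => rw [mul_smul_comm]; exact Submodule.smul_mem _ _ hx

lemma lift_mem_algPow {k : ℕ} (hk : 1 ≤ k) (w : FreeMagma A) (h : k ≤ w.length) :
    FreeMagma.lift id w ∈ algPow 𝔽 A k := by
  induction w generalizing k with
  | ih1 x =>
    have : k = 1 := by have : (FreeMagma.of x).length = 1 := rfl; omega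
    subst this; rw [algPow_one]; trivial
  | ih2 a b iha ihb =>
    rcases Nat.lt_or_ge k 2 with h1 | h2
    · have : k = 1 := by omega
      subst this; rw [algPow_one]; trivial
    · have hlen : a.length + b.length = (a * b).length := rfl
      have hap := a.length_pos
      have hbp := b.length_pos
      set s := min a.length (k - 1) with hs
      have hs1 : 1 ≤ s := by omega
      have hsla : s ≤ a.length := by omega
      have ht1 : 1 ≤ k - s := by omega
      have htlb : k - s ≤ b.length := by omega
      have hst : s + (k - s) = k := by omega
      have : FreeMagma.lift (id : A → A) (a * b)
          = FreeMagma.lift id a * FreeMagma.lift id b := map_mul _ _ _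
      rw [this, ← hst]
      exact mul_mem_algPow (iha hs1 hsla) (ihb ht1 htlb)

lemma map_algPow_le (φ : A →ₙₐ[𝔽] B) (k : ℕ) :
    (algPow 𝔽 A k).map φ.toLinearMap ≤ algPow 𝔽 B k := by
  rw [algPow, Submodule.map_span, Submodule.span_le]
  rintro x ⟨y, ⟨w, hw, rfl⟩, rfl⟩
  have : φ.toLinearMap (FreeMagma.lift id w) = FreeMagma.lift id (FreeMagma.map ⇑φ w) := by
    show φ (FreeMagma.lift id w) = _
    rw [mulHom_lift φ id w, lift_map]; rfl
  rw [this]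
  exact Submodule.subset_span ⟨FreeMagma.map ⇑φ w, by rw [length_map, hw], rfl⟩

lemma algPow_le_map {φ : A →ₙₐ[𝔽] B} (hφ : Function.Surjective φ) (k : ℕ) :
    algPow 𝔽 B k ≤ (algPow 𝔽 A k).map φ.toLinearMap := by
  rw [algPow, Submodule.span_le]
  rintro x ⟨w, hw, rfl⟩
  refine ⟨FreeMagma.lift id (FreeMagma.map (surjInv hφ) w), ?_, ?_⟩
  · exact (by rw [length_map, hw]: (FreeMagma.map (surjInv hφ) w).length = k) ▸
      gen_mem_algPow _
  · show φ _ = _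
    rw [mulHom_lift φ id _, Function.comp_id, lift_map]
    have : (⇑φ ∘ surjInv hφ) = id := funext fun b => surjInv_eq hφ b
    rw [this]


variable {C : Type*} [NonUnitalNonAssocSemiring C] [Module 𝔽 C] [SMulCommClass 𝔽 C C]
  [IsScalarTower 𝔽 C C]

lemma descend (p : A →ₙₐ[𝔽] B) (q : A →ₙₐ[𝔽] C) (hp : Function.Surjective p)
    (h : ∀ x, p x = 0 → q x = 0) : ∃ r : B →ₙₐ[𝔽] C, ∀ x, r (p x) = q x := by
  classical
  letI : AddCommGroup A := Module.addCommMonoidToAddCommGroup 𝔽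
  letI : AddCommGroup B := Module.addCommMonoidToAddCommGroup 𝔽
  letI : AddCommGroup C := Module.addCommMonoidToAddCommGroup 𝔽
  have key : ∀ u v : A, p u = p v → q u = q v := by
    intro u v huv
    have h0 : p (u - v) = 0 := by rw [map_sub, huv, sub_self]
    have h2 := h _ h0
    rw [map_sub, sub_eq_zero] at h2
    exact h2
  refine ⟨{ toFun := fun b => q (surjInv hp b)
            map_add' := ?_
            map_zero' := ?_
            map_smul' := ?_
            map_mul' := ?_ }, ?_⟩
  · intro c b
    show q (surjInv hp (c • b)) = c • q (surjInv hp b)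
    rw [key (surjInv hp (c • b)) (c • surjInv hp b)
      (by rw [map_smul, surjInv_eq hp, surjInv_eq hp]), map_smul]
  · show q (surjInv hp 0) = 0
    rw [key (surjInv hp 0) 0 (by rw [surjInv_eq hp, map_zero]), map_zero]
  · intro b₁ b₂
    show q (surjInv hp (b₁ + b₂)) = q (surjInv hp b₁) + q (surjInv hp b₂)
    rw [key (surjInv hp (b₁ + b₂)) (surjInv hp b₁ + surjInv hp b₂)
      (by rw [map_add, surjInv_eq hp, surjInv_eq hp, surjInv_eq hp]), map_add]
  · intro b₁ b₂
    show q (surjInv hp (b₁ * b₂)) = q (surjInv hp b₁) * q (surjInv hp b₂)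
    rw [key (surjInv hp (b₁ * b₂)) (surjInv hp b₁ * surjInv hp b₂)
      (by rw [map_mul, surjInv_eq hp, surjInv_eq hp, surjInv_eq hp]), map_mul]
  · intro x
    exact key _ x (surjInv_eq hp _)

lemma finite_words (n c : ℕ) : {w : FreeMagma (Fin n) | w.length ≤ c}.Finite := by
  induction c with
  | zero =>
    convert Set.finite_empty
    ext w
    simp only [Set.mem_setOf_eq, Set.mem_empty_iff_false, iff_false, not_le]
    exact w.length_pos
  | succ c ih =>
    have hsub : {w : FreeMagma (Fin n) | w.length ≤ c + 1} ⊆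
        Set.range FreeMagma.of ∪
          Set.image2 (· * ·) {w | w.length ≤ c} {w | w.length ≤ c} := by
      intro w hw
      induction w with
      | ih1 x => exact Or.inl ⟨x, rfl⟩
      | ih2 a b _ _ =>
        have hl : a.length + b.length ≤ c + 1 := hw
        have hap := a.length_pos
        have hbp := b.length_pos
        exact Or.inr ⟨a, by simp only [Set.mem_setOf_eq]; omega,
          b, by simp only [Set.mem_setOf_eq]; omega, rfl⟩
    exact Set.Finite.subset ((Set.finite_range _).union (Set.Finite.image2 _ ih ih)) hsub

open Module in
lemma exists_spanning_lift {V U : Type*} [AddCommGroup V] [Module 𝔽 V]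
    [FiniteDimensional 𝔽 V] [AddCommGroup U] [Module 𝔽 U]
    (p : V →ₗ[𝔽] U) (hp : Function.Surjective p)
    {n : ℕ} (u : Fin n → U) (hu : Submodule.span 𝔽 (Set.range u) = ⊤)
    (hn : Module.finrank 𝔽 V ≤ n) :
    ∃ y : Fin n → V, (∀ i, p (y i) = u i) ∧ Submodule.span 𝔽 (Set.range y) = ⊤ := by
  classical
  haveI : Module.Finite 𝔽 U := Module.Finite.of_surjective p hp
  obtain ⟨b, hbsub, hbspan, hbli⟩ := exists_linearIndependent 𝔽 (Set.range u)
  rw [hu] at hbspan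
  have hbfin : b.Finite := (Set.finite_range u).subset hbsub
  haveI : Fintype b := hbfin.fintype
  -- basis of U from b
  let Bb : Basis b 𝔽 U := Basis.mk hbli (by rw [Subtype.range_coe]; exact hbspan.ge)
  -- section of p on the basis
  let ℓ : U →ₗ[𝔽] V := Bb.constr 𝔽 (fun x => surjInv hp (x : U))
  have hℓ : ∀ x : U, p (ℓ x) = x := by
    have : p.comp ℓ = LinearMap.id := by
      apply Bb.ext
      intro i
      simp only [LinearMap.comp_apply, ℓ, Basis.constr_basis, LinearMap.id_apply]
      rw [surjInv_eq hp, Basis.mk_apply]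
    intro x
    exact congrArg (fun g => g x) (congrArg DFunLike.coe this)
  -- choice of indices for b
  have hchoice : ∀ x : b, ∃ i : Fin n, u i = (x : U) := fun x => hbsub x.2
  let φ : b → Fin n := fun x => (hchoice x).choose
  have hφ : ∀ x : b, u (φ x) = (x : U) := fun x => (hchoice x).choose_spec
  have hφinj : Function.Injective φ := by
    intro x y hxy
    apply Subtype.ext
    rw [← hφ x, ← hφ y, hxy]
  let D : Finset (Fin n) := Finset.univ.image φ
  have hDcard : D.card = Fintype.card b := by
    rw [Finset.card_image_of_injective _ hφinj, Finset.card_univ]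
  have hrkU : finrank 𝔽 U = Fintype.card b := finrank_eq_card_basis Bb
  have hrank : finrank 𝔽 U + finrank 𝔽 (LinearMap.ker p) = finrank 𝔽 V := by
    have h1 := LinearMap.finrank_range_add_finrank_ker p
    rwa [LinearMap.range_eq_top.mpr hp, finrank_top] at h1
  set d := finrank 𝔽 (LinearMap.ker p) with hd
  have hdle : d ≤ Dᶜ.card := by
    rw [Finset.card_compl, Fintype.card_fin, hDcard]
    omega
  let kB : Basis (Fin d) 𝔽 (LinearMap.ker p) := Module.finBasis 𝔽 (LinearMap.ker p)
  let e : (Dᶜ : Finset (Fin n)) ≃ Fin (Dᶜ.card) := Dᶜ.equivFin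
  let ψ : Fin d → Fin n := fun j => (e.symm (Fin.castLE hdle j) : Fin n)
  have hψmem : ∀ j, ψ j ∈ Dᶜ := fun j => (e.symm (Fin.castLE hdle j)).2
  have hψinj : Function.Injective ψ := by
    intro j₁ j₂ h12
    have := e.symm.injective (Subtype.ext h12)
    exact Fin.castLE_injective hdle this
  let ev : Fin n → V := fun i =>
    if h : ∃ j : Fin d, ψ j = i then (kB h.choose : V) else 0
  have hev_ker : ∀ i, ev i ∈ LinearMap.ker p := by
    intro i
    by_cases h : ∃ j : Fin d, ψ j = i
    · simp only [ev, dif_pos h]; exact (kB h.choose).2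
    · simp only [ev, dif_neg h]; exact Submodule.zero_mem _
  have hevD : ∀ x : b, ev (φ x) = 0 := by
    intro x
    have : ¬∃ j : Fin d, ψ j = φ x := by
      rintro ⟨j, hj⟩
      have h1 := hψmem j
      rw [hj] at h1
      exact (Finset.mem_compl.mp h1) (Finset.mem_image_of_mem φ (Finset.mem_univ x))
    simp only [ev, dif_neg this]
  have hevψ : ∀ j : Fin d, ev (ψ j) = (kB j : V) := by
    intro j
    have h : ∃ j' : Fin d, ψ j' = ψ j := ⟨j, rfl⟩
    have : h.choose = j := hψinj h.choose_spec
    simp only [ev, dif_pos h, this]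
  refine ⟨fun i => ℓ (u i) + ev i, ?_, ?_⟩
  · intro i
    rw [map_add, hℓ, (hev_ker i), add_zero]
  · set y : Fin n → V := fun i => ℓ (u i) + ev i with hy
    set T := Submodule.span 𝔽 (Set.range y) with hT
    have hyT : ∀ i, y i ∈ T := fun i => Submodule.subset_span ⟨i, rfl⟩
    have hbT : ∀ x : b, ℓ (x : U) ∈ T := by
      intro x
      have h0 := hyT (φ x)
      rw [hy] at h0
      simpa only [hφ x, hevD x, add_zero] using h0
    have hℓT : ∀ x : U, ℓ x ∈ T := by
      intro x
      have hx : x ∈ Submodule.span 𝔽 b := by rw [hbspan]; trivial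
      induction hx using Submodule.span_induction with
      | mem z hz => exact hbT ⟨z, hz⟩
      | zero => rw [map_zero]; exact Submodule.zero_mem _
      | add a c _ _ ha hc => rw [map_add]; exact Submodule.add_mem _ ha hc
      | smul r a _ ha => rw [map_smul]; exact Submodule.smul_mem _ _ ha
    have hkT : ∀ j : Fin d, (kB j : V) ∈ T := by
      intro j
      have h0 := hyT (ψ j)
      rw [hy] at h0
      have : (kB j : V) = y (ψ j) - ℓ (u (ψ j)) := by
        rw [hy]; simp only [hevψ j]; abel
      rw [this]
      exact Submodule.sub_mem _ (hyT (ψ j)) (hℓT _)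
    have hker' : ∀ z : LinearMap.ker p, (z : V) ∈ T := by
      intro z
      have hmem : z ∈ (⊤ : Submodule 𝔽 (LinearMap.ker p)) := trivial
      rw [← kB.span_eq] at hmem
      induction hmem using Submodule.span_induction with
      | mem z hz =>
        obtain ⟨j, hj⟩ := hz
        rw [← hj]; exact hkT j
      | zero => exact Submodule.zero_mem _
      | add a c _ _ ha hc => exact Submodule.add_mem _ ha hc
      | smul r a _ ha => exact Submodule.smul_mem _ _ ha
    have hker : ∀ v : V, v ∈ LinearMap.ker p → v ∈ T := fun v hv => hker' ⟨v, hv⟩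
    rw [eq_top_iff]
    intro v _
    have : v = ℓ (p v) + (v - ℓ (p v)) := by abel
    rw [this]
    refine Submodule.add_mem _ (hℓT _) (hker _ ?_)
    rw [LinearMap.mem_ker, map_sub, hℓ, sub_self]

lemma surjective_of_span_sup {F : Type*} [NonUnitalNonAssocSemiring F] [Module 𝔽 F]
    [SMulCommClass 𝔽 F F] [IsScalarTower 𝔽 F F] (c : ℕ)
    (hnil : algPow 𝔽 F (c + 1) = ⊥) (δ : F →ₙₐ[𝔽] F) (s : Set F)
    (hs : s ⊆ Set.range ⇑δ)
    (hspan : Submodule.span 𝔽 s ⊔ algPow 𝔽 F 2 = ⊤) : Function.Surjective ⇑δ := by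
  set R := LinearMap.range δ.toLinearMap with hR
  have hsR : Submodule.span 𝔽 s ≤ R := Submodule.span_le.mpr (by
    rintro x hx; obtain ⟨v, hv⟩ := hs hx; exact ⟨v, hv⟩)
  have hRmul : ∀ r r' : F, r ∈ R → r' ∈ R → r * r' ∈ R := by
    rintro _ _ ⟨a, rfl⟩ ⟨b, rfl⟩
    exact ⟨a * b, map_mul δ a b⟩
  -- Pge k = sup of algPow (k+m)
  set P : ℕ → Submodule 𝔽 F := fun k => ⨆ m : ℕ, algPow 𝔽 F (k + m) with hP
  have hPa : ∀ k m : ℕ, k ≤ m → algPow 𝔽 F m ≤ P k := by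
    intro k m hkm
    have : algPow 𝔽 F m = algPow 𝔽 F (k + (m - k)) := by rw [Nat.add_sub_cancel' hkm]
    rw [this]
    exact le_iSup (fun m' => algPow 𝔽 F (k + m')) (m - k)
  have hPanti : ∀ k k' : ℕ, k ≤ k' → P k' ≤ P k := by
    intro k k' hkk
    exact iSup_le fun m => hPa k (k' + m) (by omega)
  have hmulR : ∀ (t p : ℕ) (a b : F), a ∈ algPow 𝔽 F t → b ∈ P p → a * b ∈ P (t + p) := by
    intro t p a b ha hb
    have : P p ≤ Submodule.comap (LinearMap.mulLeft 𝔽 a ∘ₗ LinearMap.id) (P (t + p)) := by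
      apply iSup_le
      intro m
      intro z hz
      simp only [Submodule.mem_comap, LinearMap.comp_apply, LinearMap.id_apply,
        LinearMap.mulLeft_apply]
      exact hPa (t + p) (t + (p + m)) (by omega) (mul_mem_algPow ha hz)
    simpa using this hb
  have hmulL : ∀ (p t : ℕ) (a b : F), a ∈ P p → b ∈ algPow 𝔽 F t → a * b ∈ P (p + t) := by
    intro p t a b ha hb
    have : P p ≤ Submodule.comap (LinearMap.mulRight 𝔽 b ∘ₗ LinearMap.id) (P (p + t)) := by
      apply iSup_le
      intro m
      intro z hz
      simp only [Submodule.mem_comap, LinearMap.comp_apply, LinearMap.id_apply,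
        LinearMap.mulRight_apply]
      exact hPa (p + t) (p + m + t) (by omega) (mul_mem_algPow hz hb)
    simpa using this ha
  have hPbot : P (c + 1) = ⊥ := by
    rw [eq_bot_iff]
    apply iSup_le
    intro m
    rw [← hnil]
    rw [algPow, Submodule.span_le]
    rintro x ⟨w, hw, rfl⟩
    exact lift_mem_algPow (by omega) w (by omega)
  have main : ∀ k : ℕ, (⊤ : Submodule 𝔽 F) ≤ R ⊔ P k := by
    intro k
    induction k with
    | zero =>
      calc (⊤ : Submodule 𝔽 F) = algPow 𝔽 F 1 := algPow_one.symm
        _ ≤ P 0 := hPa 0 1 (by omega)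
        _ ≤ R ⊔ P 0 := le_sup_right
    | succ k ih =>
      have hstep : P k ≤ R ⊔ P (k + 1) := by
        apply iSup_le
        intro m
        rcases Nat.eq_zero_or_pos m with hm | hm
        · subst hm
          rw [Nat.add_zero]
          -- algPow k ≤ R ⊔ P (k+1)
          match k, ih with
          | 0, _ => rw [algPow_zero]; exact bot_le
          | 1, _ =>
            rw [algPow_one, ← hspan]
            refine sup_le (le_trans hsR le_sup_left) ?_
            exact le_trans (hPa (1 + 1) 2 (by omega)) le_sup_right
          | (k' + 2), ih =>
            rw [algPow, Submodule.span_le]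
            rintro x ⟨w, hw, rfl⟩
            match w, hw with
            | FreeMagma.of a, hw => exact absurd hw (by simp [FreeMagma.length])
            | FreeMagma.mul w₁ w₂, hw =>
              have hl : w₁.length + w₂.length = k' + 2 := hw
              have h1p := w₁.length_pos
              have h2p := w₂.length_pos
              have ha : FreeMagma.lift id w₁ ∈ R ⊔ P (w₁.length + 1) :=
                (le_trans ih (sup_le_sup_left (hPanti _ _ (by omega)) R)) Submodule.mem_top
              have hb : FreeMagma.lift id w₂ ∈ R ⊔ P (k' + 2) := ih Submodule.mem_top
              obtain ⟨r, hr, a', ha', hra⟩ := Submodule.mem_sup.mp ha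
              obtain ⟨r', hr', b', hb', hrb⟩ := Submodule.mem_sup.mp hb
              have hxeq : FreeMagma.lift (id : F → F) (w₁.mul w₂)
                  = r * r' + r * b' + a' * (FreeMagma.lift id w₂) := by
                have : FreeMagma.lift (id : F → F) (w₁.mul w₂)
                    = FreeMagma.lift id w₁ * FreeMagma.lift id w₂ := map_mul _ _ _
                rw [this, ← hra, ← hrb]
                rw [add_mul, mul_add]
              rw [hxeq]
              refine Submodule.add_mem _ (Submodule.add_mem _ ?_ ?_) ?_
              · exact Submodule.mem_sup_left (hRmul r r' hr hr')
              · -- r * b' ∈ P (k'+3)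
                apply Submodule.mem_sup_right
                have h1 : r ∈ algPow 𝔽 F 1 := by rw [algPow_one]; trivial
                have := hmulR 1 (k' + 2) r b' h1 hb'
                exact hPanti _ _ (by omega) this
              · -- a' * lift w₂ ∈ P (w₁.length+1+w₂.length)
                apply Submodule.mem_sup_right
                have h2 : FreeMagma.lift (id : F → F) w₂ ∈ algPow 𝔽 F w₂.length :=
                  gen_mem_algPow w₂
                have := hmulL (w₁.length + 1) w₂.length a' _ ha' h2
                exact hPanti _ _ (by omega) this
        · exact le_trans (hPa (k + 1) (k + m) (by omega)) le_sup_right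
      calc (⊤ : Submodule 𝔽 F) ≤ R ⊔ P k := ih
        _ ≤ R ⊔ (R ⊔ P (k + 1)) := sup_le_sup_left hstep _
        _ = R ⊔ P (k + 1) := by rw [← sup_assoc, sup_idem]
  have : (⊤ : Submodule 𝔽 F) ≤ R := by
    have := main (c + 1)
    rwa [hPbot, sup_bot_eq] at this
  intro bb
  obtain ⟨a, ha⟩ := this (Submodule.mem_top : bb ∈ ⊤)
  exact ⟨a, ha⟩

section FreeAlg
variable {X : Type*}

local notation "𝓕" => FreeNonUnitalNonAssocAlgebra 𝔽 X

/-- the monomial embedding -/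
def jmon : FreeMagma X →ₙ* FreeNonUnitalNonAssocAlgebra 𝔽 X :=
  MonoidAlgebra.ofMagma 𝔽 (FreeMagma X)

lemma jmon_apply (w : FreeMagma X) :
    (jmon w : 𝓕) = MonoidAlgebra.single w (1 : 𝔽) := rfl

lemma jmon_of (x : X) : (jmon (FreeMagma.of x) : 𝓕) = FreeNonUnitalNonAssocAlgebra.of 𝔽 x :=
  rfl

lemma span_jmon : Submodule.span 𝔽 (Set.range (jmon : FreeMagma X →ₙ* 𝓕)) = ⊤ := by
  rw [eq_top_iff]
  intro f hf
  clear hf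
  have : f ∈ Submodule.span 𝔽 (Set.range (fun w => (MonoidAlgebra.single w (1:𝔽) : 𝓕))) := by
    induction f using MonoidAlgebra.induction with
    | zero => exact Submodule.zero_mem _
    | single_add w b f _ _ ih =>
      refine Submodule.add_mem _ ?_ ih
      have : (MonoidAlgebra.single w b : 𝓕) = b • MonoidAlgebra.single w (1:𝔽) := by
        rw [MonoidAlgebra.smul_single', mul_one]
      rw [this]
      exact Submodule.smul_mem _ _ (Submodule.subset_span ⟨w, rfl⟩)
  exact this

lemma jmon_eq_lift (w : FreeMagma X) :
    (jmon w : 𝓕) = FreeMagma.lift ((jmon : FreeMagma X →ₙ* 𝓕) ∘ FreeMagma.of) w := by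
  rw [FreeMagma.lift_comp_of']

lemma jmon_mem_algPow {k : ℕ} (hk : 1 ≤ k) (w : FreeMagma X) (h : k ≤ w.length) :
    (jmon w : 𝓕) ∈ algPow 𝔽 𝓕 k := by
  rw [jmon_eq_lift]
  have : FreeMagma.lift ((jmon : FreeMagma X →ₙ* 𝓕) ∘ FreeMagma.of) w
      = FreeMagma.lift id (FreeMagma.map ((jmon : FreeMagma X →ₙ* 𝓕) ∘ FreeMagma.of) w) := by
    rw [lift_map]; rfl
  rw [this]
  exact lift_mem_algPow hk _ (by rw [length_map]; exact h)

lemma length_one_of {w : FreeMagma X} (h : w.length = 1) : ∃ x, w = FreeMagma.of x := by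
  match w with
  | FreeMagma.of x => exact ⟨x, rfl⟩
  | FreeMagma.mul a b =>
    exfalso
    have := a.length_pos
    have := b.length_pos
    have : a.length + b.length = 1 := h
    omega

end FreeAlg
end St8Aux

set_option maxHeartbeats 1000000 in
theorem statement8' (𝔽 : Type*) [Field 𝔽] (n c : ℕ) (hc : 1 ≤ c)
    (K₀ : Submodule 𝔽 (FreeNonUnitalNonAssocAlgebra 𝔽 (Fin n)))
    (hKfi : ∀ φ : FreeNonUnitalNonAssocAlgebra 𝔽 (Fin n) →ₙₐ[𝔽] FreeNonUnitalNonAssocAlgebra 𝔽 (Fin n), ∀ x ∈ K₀, φ x ∈ K₀)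
    (hKnil : algPow 𝔽 (FreeNonUnitalNonAssocAlgebra 𝔽 (Fin n)) (c + 1) ≤ K₀)
    (F : Type*) [NonUnitalNonAssocSemiring F] [Module 𝔽 F]
    [SMulCommClass 𝔽 F F] [IsScalarTower 𝔽 F F]
    (π : FreeNonUnitalNonAssocAlgebra 𝔽 (Fin n) →ₙₐ[𝔽] F)
    (hπ : Function.Surjective π) (hπker : ∀ x, π x = 0 ↔ x ∈ K₀)
    (K L : Submodule 𝔽 F)
    (A : Type*) [NonUnitalNonAssocSemiring A] [Module 𝔽 A]
    [SMulCommClass 𝔽 A A] [IsScalarTower 𝔽 A A]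
    (εK : F →ₙₐ[𝔽] A) (hεK : Function.Surjective εK) (hεKker : ∀ x, εK x = 0 ↔ x ∈ K)
    (B : Type*) [NonUnitalNonAssocSemiring B] [Module 𝔽 B]
    [SMulCommClass 𝔽 B B] [IsScalarTower 𝔽 B B]
    (εL : F →ₙₐ[𝔽] B) (hεL : Function.Surjective εL) (hεLker : ∀ x, εL x = 0 ↔ x ∈ L) :
    (∃ f : A →ₙₐ[𝔽] B, Function.Bijective f) ↔
      (∃ δ : F →ₙₐ[𝔽] F, Function.Bijective δ ∧ K.map δ.toLinearMap = L) := by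
  classical
  letI : AddCommGroup F := Module.addCommMonoidToAddCommGroup 𝔽
  letI : AddCommGroup A := Module.addCommMonoidToAddCommGroup 𝔽
  letI : AddCommGroup B := Module.addCommMonoidToAddCommGroup 𝔽
  open St8Aux Submodule in
  -- kernels as submodules
  have hkerK : LinearMap.ker εK.toLinearMap = K := by
    ext v; simpa using hεKker v
  have hkerL : LinearMap.ker εL.toLinearMap = L := by
    ext v; simpa using hεLker v
  set x : Fin n → F := fun i => π (FreeNonUnitalNonAssocAlgebra.of 𝔽 i) with hxdef
  set F2 : Submodule 𝔽 F := algPow 𝔽 F 2 with hF2def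
  set jm : FreeMagma (Fin n) →ₙ* FreeNonUnitalNonAssocAlgebra 𝔽 (Fin n) := St8Aux.jmon
    with hjm
  -- the image of the free algebra is spanned by monomials
  have htopF : (⊤ : Submodule 𝔽 F)
      = Submodule.span 𝔽 (Set.range (⇑π ∘ ⇑jm)) := by
    have h1 : Submodule.map π.toLinearMap ⊤ = ⊤ := by
      rw [Submodule.map_top, LinearMap.range_eq_top]
      exact hπ
    conv_lhs => rw [← h1, ← St8Aux.span_jmon (𝔽 := 𝔽) (X := Fin n)]
    rw [Submodule.map_span, ← Set.range_comp]
    rfl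
  have hπjm_big : ∀ w : FreeMagma (Fin n), ¬ (w.length ≤ c) → π (jm w) = 0 := by
    intro w hw
    refine (hπker _).mpr (hKnil ?_)
    exact St8Aux.jmon_mem_algPow (by omega) w (by omega)
  haveI hFD : FiniteDimensional 𝔽 F := by
    have hfin : ((⇑π ∘ ⇑jm) '' {w : FreeMagma (Fin n) | w.length ≤ c}).Finite :=
      (St8Aux.finite_words n c).image _
    refine Module.Finite.of_fg_top ((Submodule.fg_def).mpr ⟨_, hfin, ?_⟩)
    rw [eq_top_iff, htopF, Submodule.span_le]
    rintro _ ⟨w, rfl⟩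
    by_cases hw : w.length ≤ c
    · exact Submodule.subset_span ⟨w, hw, rfl⟩
    · have : (⇑π ∘ ⇑jm) w = 0 := hπjm_big w hw
      rw [this]
      exact Submodule.zero_mem _
  haveI hAD : FiniteDimensional 𝔽 A := Module.Finite.of_surjective εK.toLinearMap hεK
  haveI hBD : FiniteDimensional 𝔽 B := Module.Finite.of_surjective εL.toLinearMap hεL
  -- F is spanned by generators mod F2
  have hxF : Submodule.span 𝔽 (Set.range x) ⊔ F2 = ⊤ := by
    rw [eq_top_iff, htopF, Submodule.span_le]
    rintro _ ⟨w, rfl⟩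
    rcases Nat.lt_or_ge w.length 2 with h2 | h2
    · have h1 : w.length = 1 := by have := w.length_pos; omega
      obtain ⟨i, rfl⟩ := St8Aux.length_one_of h1
      refine Submodule.mem_sup_left (Submodule.subset_span ⟨i, ?_⟩)
      show π (FreeNonUnitalNonAssocAlgebra.of 𝔽 i) = (⇑π ∘ ⇑jm) (FreeMagma.of i)
      rfl
    · apply Submodule.mem_sup_right
      have hmem : jm w ∈ algPow 𝔽 (FreeNonUnitalNonAssocAlgebra 𝔽 (Fin n)) 2 :=
        St8Aux.jmon_mem_algPow (by omega) w h2
      have := St8Aux.map_algPow_le π 2 ⟨jm w, hmem, rfl⟩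
      exact this
  have hnilF : algPow 𝔽 F (c + 1) = ⊥ := by
    rw [eq_bot_iff]
    refine le_trans (St8Aux.algPow_le_map hπ (c + 1)) (le_trans (Submodule.map_mono hKnil) ?_)
    rintro _ ⟨v, hv, rfl⟩
    simpa using (hπker v).mpr hv
  constructor
  · rintro ⟨f, hfbij⟩
    set z : Fin n → F := fun i => surjInv hεL (f (εK (x i))) with hzdef
    have hz : ∀ i, εL (z i) = f (εK (x i)) := fun i => surjInv_eq hεL _
    -- B is spanned by f(εK(x i)) together with εL(F2)
    have hBtop : (⊤ : Submodule 𝔽 B) = Submodule.span 𝔽 (Set.range (fun i => f (εK (x i))))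
        ⊔ Submodule.map εL.toLinearMap F2 := by
      have hA : Submodule.map εK.toLinearMap ⊤ = ⊤ := by
        rw [Submodule.map_top, LinearMap.range_eq_top]; exact hεK
      have hB : Submodule.map f.toLinearMap ⊤ = ⊤ := by
        rw [Submodule.map_top, LinearMap.range_eq_top]; exact hfbij.2
      apply le_antisymm
      · rw [← hB, ← hA, ← hxF, Submodule.map_sup, Submodule.map_sup]
        apply sup_le
        · rw [Submodule.map_span, Submodule.map_span, Submodule.span_le]
          rintro _ ⟨_, ⟨_, ⟨i, rfl⟩, rfl⟩, rfl⟩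
          exact Submodule.mem_sup_left (Submodule.subset_span ⟨i, rfl⟩)
        · refine le_trans ?_ le_sup_right
          refine le_trans (Submodule.map_mono (St8Aux.map_algPow_le εK 2)) ?_
          refine le_trans (St8Aux.map_algPow_le f 2) ?_
          exact St8Aux.algPow_le_map hεL 2
      · exact le_top
    -- hence span z ⊔ F2 ⊔ L = ⊤ in F
    have hzF : Submodule.span 𝔽 (Set.range z) ⊔ F2 ⊔ L = ⊤ := by
      have hmap : Submodule.map εL.toLinearMap (Submodule.span 𝔽 (Set.range z) ⊔ F2) = ⊤ := by
        rw [Submodule.map_sup, Submodule.map_span, ← Set.range_comp]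
        have : (⇑εL.toLinearMap ∘ z) = fun i => f (εK (x i)) := funext fun i => hz i
        rw [this, ← hBtop]
      have := congrArg (Submodule.comap εL.toLinearMap) hmap
      rwa [Submodule.comap_map_eq, hkerL, Submodule.comap_top] at this
    -- move to the quotient V = F/F2
    set mk2 : F →ₗ[𝔽] F ⧸ F2 := F2.mkQ with hmk2
    set W : Submodule 𝔽 (F ⧸ F2) := Submodule.map mk2 L with hW
    set mkW : (F ⧸ F2) →ₗ[𝔽] ((F ⧸ F2) ⧸ W) := W.mkQ with hmkW
    have hmk2surj : Function.Surjective mk2 := Submodule.mkQ_surjective F2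
    have hmkWsurj : Function.Surjective mkW := Submodule.mkQ_surjective W
    haveI : FiniteDimensional 𝔽 (F ⧸ F2) := Module.Finite.of_surjective mk2 hmk2surj
    have hu : Submodule.span 𝔽 (Set.range (fun i => mkW (mk2 (z i)))) = ⊤ := by
      have h0 : Submodule.map (mkW ∘ₗ mk2) (Submodule.span 𝔽 (Set.range z) ⊔ F2 ⊔ L) = ⊤ := by
        rw [hzF, Submodule.map_top, LinearMap.range_eq_top]
        exact hmkWsurj.comp hmk2surj
      rw [Submodule.map_sup, Submodule.map_sup, Submodule.map_span, ← Set.range_comp] at h0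
      have e2 : Submodule.map (mkW ∘ₗ mk2) F2 = ⊥ := by
        rw [eq_bot_iff]
        rintro _ ⟨v, hv, rfl⟩
        have : mk2 v = 0 := by
          rw [hmk2, ← LinearMap.mem_ker, Submodule.ker_mkQ]; exact hv
        simp only [LinearMap.comp_apply, this, map_zero]
        exact Submodule.zero_mem ⊥
      have e3 : Submodule.map (mkW ∘ₗ mk2) L = ⊥ := by
        rw [eq_bot_iff]
        rintro _ ⟨v, hv, rfl⟩
        have : mk2 v ∈ W := ⟨v, hv, rfl⟩
        simp only [LinearMap.comp_apply]
        rw [Submodule.mem_bot, hmkW, ← LinearMap.mem_ker, Submodule.ker_mkQ]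
        exact this
      rw [e2, e3, sup_bot_eq, sup_bot_eq] at h0
      rw [← h0]
      rfl
    have hn' : Module.finrank 𝔽 (F ⧸ F2) ≤ n := by
      have hspanV : Submodule.span 𝔽 (Set.range (⇑mk2 ∘ x)) = ⊤ := by
        have h0 : Submodule.map mk2 (Submodule.span 𝔽 (Set.range x) ⊔ F2) = ⊤ := by
          rw [hxF, Submodule.map_top, LinearMap.range_eq_top]; exact hmk2surj
        rw [Submodule.map_sup, Submodule.map_span, ← Set.range_comp] at h0
        have e2 : Submodule.map mk2 F2 = ⊥ := by
          rw [eq_bot_iff]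
          rintro _ ⟨v, hv, rfl⟩
          rw [Submodule.mem_bot, hmk2, ← LinearMap.mem_ker, Submodule.ker_mkQ]
          exact hv
        rw [e2, sup_bot_eq] at h0
        exact h0
      have h1 := finrank_span_le_card (R := 𝔽) (Set.range (⇑mk2 ∘ x))
      rw [hspanV] at h1
      have h2 : (Set.range (⇑mk2 ∘ x)).toFinset.card ≤ n := by
        rw [Set.toFinset_range]
        exact le_trans (Finset.card_image_le) (by simp)
      have h3 := finrank_top 𝔽 (F ⧸ F2)
      omega
    obtain ⟨Y, hY1, hY2⟩ := St8Aux.exists_spanning_lift mkW hmkWsurj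
      (fun i => mkW (mk2 (z i))) hu hn'
    have hl : ∀ i, ∃ l : F, l ∈ L ∧ mk2 l = Y i - mk2 (z i) := by
      intro i
      have hmem : Y i - mk2 (z i) ∈ W := by
        rw [← Submodule.Quotient.eq W]
        have := hY1 i
        rw [hmkW, Submodule.mkQ_apply, Submodule.mkQ_apply] at this
        exact this
      obtain ⟨l, hlL, hlm⟩ := hmem
      exact ⟨l, hlL, hlm⟩
    choose l hlL hlm using hl
    set y : Fin n → F := fun i => z i + l i with hydef
    have hyY : ∀ i, mk2 (y i) = Y i := by
      intro i
      rw [hydef]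
      simp only [map_add, hlm i]
      abel
    have hyspan : Submodule.span 𝔽 (Set.range y) ⊔ F2 = ⊤ := by
      have h0 : Submodule.map mk2 (Submodule.span 𝔽 (Set.range y)) = ⊤ := by
        rw [Submodule.map_span, ← Set.range_comp]
        have : (⇑mk2 ∘ y) = Y := funext hyY
        rw [this, hY2]
      have := congrArg (Submodule.comap mk2) h0
      rw [Submodule.comap_map_eq, Submodule.ker_mkQ] at this
      rw [this]
      simp
    have hεLy : ∀ i, εL (y i) = f (εK (x i)) := by
      intro i
      rw [hydef]
      simp only
      rw [map_add, (hεLker _).mpr (hlL i), add_zero, hz]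
    -- build the endomorphism δ
    set ψ : FreeNonUnitalNonAssocAlgebra 𝔽 (Fin n) →ₙₐ[𝔽] FreeNonUnitalNonAssocAlgebra 𝔽 (Fin n) :=
      FreeNonUnitalNonAssocAlgebra.lift 𝔽 (fun i => surjInv hπ (y i)) with hψ
    have hkercond : ∀ v, π v = 0 → (π.comp ψ) v = 0 := by
      intro v hv
      exact (hπker _).mpr (hKfi ψ v ((hπker v).mp hv))
    obtain ⟨δ, hδ⟩ := St8Aux.descend π (π.comp ψ) hπ hkercond
    have hδx : ∀ i, δ (x i) = y i := by
      intro i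
      rw [hxdef]
      simp only
      rw [hδ (FreeNonUnitalNonAssocAlgebra.of 𝔽 i)]
      show π (ψ (FreeNonUnitalNonAssocAlgebra.of 𝔽 i)) = y i
      rw [hψ, FreeNonUnitalNonAssocAlgebra.lift_of_apply]
      exact surjInv_eq hπ _
    have hGident : (εL.comp δ).comp π = (f.comp εK).comp π := by
      have hinj := (FreeNonUnitalNonAssocAlgebra.lift 𝔽
        (X := Fin n) (A := B)).symm.injective
      apply hinj
      rw [FreeNonUnitalNonAssocAlgebra.lift_symm_apply,
        FreeNonUnitalNonAssocAlgebra.lift_symm_apply]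
      funext i
      show εL (δ (π (FreeNonUnitalNonAssocAlgebra.of 𝔽 i))) = f (εK (π (FreeNonUnitalNonAssocAlgebra.of 𝔽 i)))
      rw [show π (FreeNonUnitalNonAssocAlgebra.of 𝔽 i) = x i from rfl, hδx i, hεLy i]
    have hcomm : ∀ v : F, εL (δ v) = f (εK v) := by
      intro v
      obtain ⟨u, rfl⟩ := hπ v
      exact DFunLike.congr_fun hGident u
    -- δ is surjective, hence bijective
    have hsurj : Function.Surjective ⇑δ := by
      apply St8Aux.surjective_of_span_sup c hnilF δ (Set.range y) ?_ hyspan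
      rintro _ ⟨i, rfl⟩
      exact ⟨x i, hδx i⟩
    have hinj : Function.Injective ⇑δ := by
      have h1 : Function.Surjective ⇑δ.toLinearMap := hsurj
      have := (LinearMap.injective_iff_surjective (f := δ.toLinearMap)).mpr h1
      exact this
    -- δ maps K into L
    have hmapKL : Submodule.map δ.toLinearMap K ≤ L := by
      rintro _ ⟨v, hv, rfl⟩
      apply (hεLker _).mp
      show εL (δ v) = 0
      rw [hcomm, (hεKker v).mpr hv, map_zero]
    -- dimension count
    have hrkA : Module.finrank 𝔽 A + Module.finrank 𝔽 K = Module.finrank 𝔽 F := by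
      have h1 := LinearMap.finrank_range_add_finrank_ker εK.toLinearMap
      rwa [(LinearMap.range_eq_top (f := εK.toLinearMap)).mpr hεK, finrank_top, hkerK] at h1
    have hrkB : Module.finrank 𝔽 B + Module.finrank 𝔽 L = Module.finrank 𝔽 F := by
      have h1 := LinearMap.finrank_range_add_finrank_ker εL.toLinearMap
      rwa [(LinearMap.range_eq_top (f := εL.toLinearMap)).mpr hεL, finrank_top, hkerL] at h1
    have hrkAB : Module.finrank 𝔽 A = Module.finrank 𝔽 B := by
      exact (LinearEquiv.ofBijective f.toLinearMap hfbij).finrank_eq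
    have hrkKL : Module.finrank 𝔽 K = Module.finrank 𝔽 L := by omega
    have hrkmap : Module.finrank 𝔽 (Submodule.map δ.toLinearMap K) = Module.finrank 𝔽 K :=
      (Submodule.equivMapOfInjective δ.toLinearMap hinj K).finrank_eq.symm
    have hfinal : Submodule.map δ.toLinearMap K = L := by
      apply Submodule.eq_of_le_of_finrank_le hmapKL
      omega
    exact ⟨δ, ⟨hinj, hsurj⟩, hfinal⟩
  · rintro ⟨δ, hδbij, hδK⟩
    have hkercond : ∀ v, εK v = 0 → (εL.comp δ) v = 0 := by
      intro v hv
      have h1 : δ v ∈ Submodule.map δ.toLinearMap K := ⟨v, (hεKker v).mp hv, rfl⟩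
      rw [hδK] at h1
      exact (hεLker _).mpr h1
    obtain ⟨fh, hfh⟩ := St8Aux.descend εK (εL.comp δ) hεK hkercond
    refine ⟨fh, ⟨?_, ?_⟩⟩
    · -- injective
      intro a a' haa
      obtain ⟨v, rfl⟩ := hεK a
      obtain ⟨v', rfl⟩ := hεK a'
      rw [hfh, hfh] at haa
      have h0 : εL (δ (v - v')) = 0 := by
        rw [map_sub, map_sub, sub_eq_zero]
        exact haa
      have h1 : δ (v - v') ∈ L := (hεLker _).mp h0
      rw [← hδK] at h1
      obtain ⟨k, hk, hk2⟩ := h1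
      have : v - v' = k := hδbij.1 hk2.symm
      have : εK (v - v') = 0 := by rw [this]; exact (hεKker k).mpr hk
      rw [map_sub, sub_eq_zero] at this
      exact this
    · -- surjective
      intro b
      obtain ⟨v, rfl⟩ := hεL b
      obtain ⟨u, rfl⟩ := hδbij.2 v
      exact ⟨εK u, hfh u⟩


/-- Malcev: Let `F = 𝓕_n/K₀` be a relatively free `c`-step nilpotent algebra of
finite rank `n`, and let `K, L` be ideals of `F`, with quotients presented by surjections
`εK : F → A` (kernel `K`) and `εL : F → B` (kernel `L`).  Then `F/K ≅ F/L` iff there is an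
automorphism `δ` of `F` with `δ(K) = L`. -/
theorem statement8 (𝔽 : Type*) [Field 𝔽] (n c : ℕ) (hc : 1 ≤ c)
    (K₀ : Submodule 𝔽 (FreeNonUnitalNonAssocAlgebra 𝔽 (Fin n)))
    (hKideal : IsAlgIdeal 𝔽 K₀) (hKfi : FullyInvariant 𝔽 K₀)
    (hKnil : algPow 𝔽 (FreeNonUnitalNonAssocAlgebra 𝔽 (Fin n)) (c + 1) ≤ K₀)
    (F : Type*) [NonUnitalNonAssocSemiring F] [Module 𝔽 F]
    [SMulCommClass 𝔽 F F] [IsScalarTower 𝔽 F F]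
    (π : FreeNonUnitalNonAssocAlgebra 𝔽 (Fin n) →ₙₐ[𝔽] F)
    (hπ : Function.Surjective π) (hπker : ∀ x, π x = 0 ↔ x ∈ K₀)
    (K L : Submodule 𝔽 F) (hK : IsAlgIdeal 𝔽 K) (hL : IsAlgIdeal 𝔽 L)
    (A : Type*) [NonUnitalNonAssocSemiring A] [Module 𝔽 A]
    [SMulCommClass 𝔽 A A] [IsScalarTower 𝔽 A A]
    (εK : F →ₙₐ[𝔽] A) (hεK : Function.Surjective εK) (hεKker : ∀ x, εK x = 0 ↔ x ∈ K)
    (B : Type*) [NonUnitalNonAssocSemiring B] [Module 𝔽 B]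
    [SMulCommClass 𝔽 B B] [IsScalarTower 𝔽 B B]
    (εL : F →ₙₐ[𝔽] B) (hεL : Function.Surjective εL) (hεLker : ∀ x, εL x = 0 ↔ x ∈ L) :
    (∃ f : A →ₙₐ[𝔽] B, Function.Bijective f) ↔
      (∃ δ : F →ₙₐ[𝔽] F, Function.Bijective δ ∧ K.map (δ : F →ₗ[𝔽] F) = L) := by
    exact statement8' 𝔽 n c hc K₀ hKfi hKnil F π hπ hπker K L A εK hεK hεKker B εL hεL hεLker
end
end

section
/- Let 𝔽 be a field, c ≥ 1, X a set with more than c elements, and F = 𝓕(X)/K, where K is a fully invariant multihomogeneous ideal of the free nonassociative algebra 𝓕(X) over 𝔽 containing 𝓕(X)^{c+1}. Let Y ⊆ X with |Y| = c + 1, and let u ∈ F be such that u·x̄ = 0 for every x ∈ Y, where x̄ denotes the image in F of the generator x. Then u·v = 0 for all v ∈ F. Similarly, if x̄·u = 0 for every x ∈ Y, then v·u = 0 for all v ∈ F. -/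
noncomputable section

open Function

@[simp] lemma multideg_of {X : Type*} (x : X) :
    multideg (FreeMagma.of x) = Finsupp.single x 1 := rfl

@[simp] lemma multideg_mul {X : Type*} (a b : FreeMagma X) :
    multideg (a * b) = multideg a + multideg b := rfl

def mono (𝔽 : Type*) [Semiring 𝔽] {X : Type*} (w : FreeMagma X) :
    FreeNonUnitalNonAssocAlgebra 𝔽 X := MonoidAlgebra.single w 1

lemma mono_mul (𝔽 : Type*) [Semiring 𝔽] {X : Type*} (a b : FreeMagma X) :
    mono 𝔽 (a * b) = mono 𝔽 a * mono 𝔽 b := by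
  simp [mono, MonoidAlgebra.single_mul_single]

lemma of_eq_mono (𝔽 : Type*) [Semiring 𝔽] {X : Type*} (x : X) :
    FreeNonUnitalNonAssocAlgebra.of 𝔽 x = mono 𝔽 (FreeMagma.of x) := rfl

lemma multideg_sum_eq_length {X : Type*} (w : FreeMagma X) :
    (multideg w).sum (fun _ n => n) = w.length := by
  induction w with
  | ih1 x => simp [Finsupp.sum_single_index]
  | ih2 a b ha hb =>
    rw [multideg_mul, Finsupp.sum_add_index' (fun _ => rfl) (fun _ _ _ => rfl), ha, hb]
    rfl

lemma exists_word (𝔽 : Type*) [Semiring 𝔽] {X : Type*} (w : FreeMagma X) :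
    ∀ m : ℕ, 1 ≤ m → m ≤ w.length →
    ∃ v : FreeMagma (FreeNonUnitalNonAssocAlgebra 𝔽 X),
      v.length = m ∧ FreeMagma.lift id v = mono 𝔽 w := by
  induction w with
  | ih1 x =>
    intro m h1 h2
    simp only [FreeMagma.length] at h2
    have : m = 1 := le_antisymm h2 h1
    subst this
    exact ⟨FreeMagma.of (mono 𝔽 (FreeMagma.of x)), rfl, rfl⟩
  | ih2 a b ha hb =>
    intro m h1 h2
    rcases eq_or_lt_of_le h1 with h | h
    · exact ⟨FreeMagma.of (mono 𝔽 (a * b)), h.symm ▸ rfl, rfl⟩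
    · have hla := a.length_pos
      have hlb := b.length_pos
      simp only [FreeMagma.length] at h2
      set m1 := min a.length (m - 1) with hm1
      obtain ⟨v1, hv1l, hv1⟩ := ha m1 (by omega) (by omega)
      obtain ⟨v2, hv2l, hv2⟩ := hb (m - m1) (by omega) (by omega)
      refine ⟨v1 * v2, ?_, ?_⟩
      · simp only [FreeMagma.length, hv1l, hv2l]; omega
      · rw [map_mul, hv1, hv2, mono_mul]

lemma mono_mem_algPow (𝔽 : Type*) [Semiring 𝔽] {X : Type*} (w : FreeMagma X)
    (m : ℕ) (h1 : 1 ≤ m) (h2 : m ≤ w.length) :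
    mono 𝔽 w ∈ algPow 𝔽 (FreeNonUnitalNonAssocAlgebra 𝔽 X) m := by
  obtain ⟨v, hv1, hv2⟩ := exists_word 𝔽 w m h1 h2
  exact Submodule.subset_span ⟨v, hv1, hv2⟩


open scoped Classical

lemma mhComponent_apply {𝔽 : Type*} [Semiring 𝔽] {X : Type*}
    (f : FreeNonUnitalNonAssocAlgebra 𝔽 X) (α : X →₀ ℕ) (v : FreeMagma X) :
    (mhComponent f α).coeff v = if multideg v = α then f.coeff v else 0 := by
  classical
  rw [mhComponent, MonoidAlgebra.coeff_ofCoeff, Finsupp.filter_apply]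
  congr

lemma mhComponent_add {𝔽 : Type*} [Semiring 𝔽] {X : Type*}
    (f g : FreeNonUnitalNonAssocAlgebra 𝔽 X) (α : X →₀ ℕ) :
    mhComponent (f + g) α = mhComponent f α + mhComponent g α := by
  ext v
  rw [show ((mhComponent f α + mhComponent g α).coeff v : 𝔽)
      = (mhComponent f α).coeff v + (mhComponent g α).coeff v from rfl,
    mhComponent_apply, mhComponent_apply, mhComponent_apply,
    show ((f + g).coeff v : 𝔽) = f.coeff v + g.coeff v from rfl]
  split_ifs <;> simp

lemma mhComponent_zero {𝔽 : Type*} [Semiring 𝔽] (X : Type*) (α : X →₀ ℕ) :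
    mhComponent (0 : FreeNonUnitalNonAssocAlgebra 𝔽 X) α = 0 := by
  ext v
  simp only [mhComponent_apply]
  split_ifs <;> rfl

lemma mhComponent_single {𝔽 : Type*} [Semiring 𝔽] {X : Type*} (w : FreeMagma X) (b : 𝔽)
    (α : X →₀ ℕ) :
    mhComponent (MonoidAlgebra.single w b : FreeNonUnitalNonAssocAlgebra 𝔽 X) α =
      if multideg w = α then MonoidAlgebra.single w b else 0 := by
  ext v
  rw [mhComponent_apply]
  by_cases hw : multideg w = α
  · rw [if_pos hw]
    by_cases hv : multideg v = α
    · rw [if_pos hv]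
    · rw [if_neg hv]
      have : v ≠ w := fun h => hv (h ▸ hw)
      exact (Finsupp.single_eq_of_ne' (Ne.symm this)).symm
  · rw [if_neg hw]
    by_cases hv : multideg v = α
    · rw [if_pos hv]
      have : v ≠ w := fun h => hw (h ▸ hv)
      rw [MonoidAlgebra.coeff_single, Finsupp.single_eq_of_ne' (Ne.symm this)]
      rfl
    · rw [if_neg hv]; rfl

lemma sum_mhComponent {𝔽 : Type*} [Semiring 𝔽] {X : Type*}
    (f : FreeNonUnitalNonAssocAlgebra 𝔽 X) :
    ∑ α ∈ (Finsupp.support f.coeff).image multideg, mhComponent f α = f := by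
  classical
  ext v
  rw [MonoidAlgebra.coeff_sum, Finset.sum_apply']
  simp only [mhComponent_apply]
  rw [Finset.sum_ite_eq]
  split_ifs with h
  · rfl
  · by_contra hne
    exact h (Finset.mem_image_of_mem multideg (Finsupp.mem_support_iff.mpr fun h0 => hne h0.symm))

lemma mhComponent_support {𝔽 : Type*} [Semiring 𝔽] {X : Type*}
    (f : FreeNonUnitalNonAssocAlgebra 𝔽 X) (α : X →₀ ℕ) (v : FreeMagma X)
    (hv : v ∈ (mhComponent f α).coeff.support) : multideg v = α := by
  by_contra h
  rw [Finsupp.mem_support_iff, mhComponent_apply, if_neg h] at hv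
  exact hv rfl

lemma mhComponent_mul_mono {𝔽 : Type*} [Semiring 𝔽] {X : Type*}
    (f : FreeNonUnitalNonAssocAlgebra 𝔽 X) (w : FreeMagma X) (γ : X →₀ ℕ) :
    mhComponent (f * mono 𝔽 w) (γ + multideg w) = mhComponent f γ * mono 𝔽 w := by
  induction f using MonoidAlgebra.induction with
  | zero => rw [mhComponent_zero]; simp [mhComponent_zero]
  | single_add a b g hag hb ih =>
    rw [add_mul, mhComponent_add, ih, mhComponent_add, add_mul]
    congr 1
    rw [show (MonoidAlgebra.single a b * mono 𝔽 w : FreeNonUnitalNonAssocAlgebra 𝔽 X)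
        = MonoidAlgebra.single (a * w) b by rw [mono, MonoidAlgebra.single_mul_single, mul_one]]
    rw [mhComponent_single, mhComponent_single]
    have hiff : multideg (a * w) = γ + multideg w ↔ multideg a = γ := by
      rw [multideg_mul]; exact ⟨fun h => add_right_cancel h, fun h => by rw [h]⟩
    split_ifs with h1 h2 h2
    · rw [mono, MonoidAlgebra.single_mul_single, mul_one]
    · exact absurd (hiff.mp h1) h2
    · exact absurd (hiff.mpr h2) h1
    · rw [zero_mul]

lemma mono_mul_mhComponent {𝔽 : Type*} [Semiring 𝔽] {X : Type*}
    (f : FreeNonUnitalNonAssocAlgebra 𝔽 X) (w : FreeMagma X) (γ : X →₀ ℕ) :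
    mhComponent (mono 𝔽 w * f) (multideg w + γ) = mono 𝔽 w * mhComponent f γ := by
  induction f using MonoidAlgebra.induction with
  | zero => rw [mhComponent_zero]; simp [mhComponent_zero]
  | single_add a b g hag hb ih =>
    rw [mul_add, mhComponent_add, ih, mhComponent_add, mul_add]
    congr 1
    rw [show (mono 𝔽 w * MonoidAlgebra.single a b : FreeNonUnitalNonAssocAlgebra 𝔽 X)
        = MonoidAlgebra.single (w * a) b by rw [mono, MonoidAlgebra.single_mul_single, one_mul]]
    rw [mhComponent_single, mhComponent_single]
    have hiff : multideg (w * a) = multideg w + γ ↔ multideg a = γ := by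
      rw [multideg_mul]; exact ⟨fun h => add_left_cancel h, fun h => by rw [h]⟩
    split_ifs with h1 h2 h2
    · rw [mono, MonoidAlgebra.single_mul_single, one_mul]
    · exact absurd (hiff.mp h1) h2
    · exact absurd (hiff.mpr h2) h1
    · rw [mul_zero]


def endo (𝔽 : Type*) [CommSemiring 𝔽] {X : Type*} (g : FreeNonUnitalNonAssocAlgebra 𝔽 X) (x : X) :
    FreeNonUnitalNonAssocAlgebra 𝔽 X →ₙₐ[𝔽] FreeNonUnitalNonAssocAlgebra 𝔽 X :=
  FreeNonUnitalNonAssocAlgebra.lift 𝔽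
    (fun y => if y = x then g else FreeNonUnitalNonAssocAlgebra.of 𝔽 y)

lemma endo_of_self {𝔽 : Type*} [CommSemiring 𝔽] {X : Type*} (g : FreeNonUnitalNonAssocAlgebra 𝔽 X)
    (x : X) : endo 𝔽 g x (FreeNonUnitalNonAssocAlgebra.of 𝔽 x) = g := by
  rw [endo, FreeNonUnitalNonAssocAlgebra.lift_of_apply, if_pos rfl]

lemma endo_fix_mono {𝔽 : Type*} [CommSemiring 𝔽] {X : Type*} (g : FreeNonUnitalNonAssocAlgebra 𝔽 X)
    (x : X) (v : FreeMagma X) (hv : multideg v x = 0) :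
    endo 𝔽 g x (mono 𝔽 v) = mono 𝔽 v := by
  induction v with
  | ih1 y =>
    have hyx : y ≠ x := by
      intro h; subst h
      rw [multideg_of, Finsupp.single_eq_same] at hv
      exact one_ne_zero hv
    rw [← of_eq_mono, endo, FreeNonUnitalNonAssocAlgebra.lift_of_apply, if_neg hyx]
  | ih2 a b ha hb =>
    rw [multideg_mul, Finsupp.add_apply] at hv
    rw [mono_mul, map_mul, ha (by omega), hb (by omega)]

lemma endo_fix {𝔽 : Type*} [CommSemiring 𝔽] {X : Type*} (g : FreeNonUnitalNonAssocAlgebra 𝔽 X)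
    (x : X) (f : FreeNonUnitalNonAssocAlgebra 𝔽 X)
    (hf : ∀ v ∈ f.coeff.support, multideg v x = 0) : endo 𝔽 g x f = f := by
  induction f using MonoidAlgebra.induction with
  | zero => exact map_zero _
  | single_add a b f ha0 hb ih =>
    have hmem : ∀ v : FreeMagma X, v ∈ f.coeff.support ∨ v = a →
        v ∈ (MonoidAlgebra.single a b + f).coeff.support := by
      intro v hv
      rw [Finsupp.mem_support_iff, MonoidAlgebra.coeff_add, Finsupp.add_apply, MonoidAlgebra.coeff_single]
      rcases hv with hv | rfl
      · have hva : v ≠ a := fun h => ha0 (h ▸ hv)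
        rw [Finsupp.single_eq_of_ne' (Ne.symm hva), zero_add]
        exact Finsupp.mem_support_iff.mp hv
      · rw [Finsupp.single_eq_same, Finsupp.notMem_support_iff.mp ha0, add_zero]
        exact hb
    rw [map_add, ih (fun v hv => hf v (hmem v (Or.inl hv)))]
    congr 1
    have : (MonoidAlgebra.single a b : FreeNonUnitalNonAssocAlgebra 𝔽 X) = b • mono 𝔽 a := by
      rw [mono, MonoidAlgebra.smul_single', mul_one]
    rw [this, map_smul, endo_fix_mono _ _ _ (hf a (hmem a (Or.inr rfl)))]

lemma card_support_le_sum {X : Type*} (γ : X →₀ ℕ) :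
    γ.support.card ≤ γ.sum fun _ n => n := by
  rw [Finsupp.sum]
  calc γ.support.card = ∑ _x ∈ γ.support, 1 := by simp
    _ ≤ ∑ x ∈ γ.support, γ x :=
      Finset.sum_le_sum fun x hx =>
        Nat.one_le_iff_ne_zero.mpr (Finsupp.mem_support_iff.mp hx)

lemma key_right {𝔽 : Type*} [Field 𝔽] {X : Type*} {c : ℕ}
    {K : Submodule 𝔽 (FreeNonUnitalNonAssocAlgebra 𝔽 X)}
    (hKideal : IsAlgIdeal 𝔽 K) (hKfi : FullyInvariant 𝔽 K) (hKmh : Multihomogeneous 𝔽 K)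
    (hKnil : algPow 𝔽 (FreeNonUnitalNonAssocAlgebra 𝔽 X) (c + 1) ≤ K)
    {Y : Finset X} (hY : Y.card = c + 1)
    (f : FreeNonUnitalNonAssocAlgebra 𝔽 X)
    (hf : ∀ x ∈ Y, f * FreeNonUnitalNonAssocAlgebra.of 𝔽 x ∈ K)
    (w : FreeMagma X) : f * mono 𝔽 w ∈ K := by
  rw [← sum_mhComponent f, Finset.sum_mul]
  apply Submodule.sum_mem
  intro γ _
  set g := mhComponent f γ with hg
  have hsupp : ∀ v ∈ g.coeff.support, multideg v = γ := fun v hv => mhComponent_support f γ v hv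
  by_cases hcase : c + 1 ≤ (γ.sum fun _ n => n) + w.length
  · have hrep : g * mono 𝔽 w = ∑ v ∈ g.coeff.support, g.coeff v • mono 𝔽 (v * w) := by
      conv_lhs => rw [← MonoidAlgebra.sum_coeff_single g]
      rw [Finsupp.sum, Finset.sum_mul]
      refine Finset.sum_congr rfl fun v hv => ?_
      rw [mono_mul, ← smul_mul_assoc]
      congr 1
      rw [mono, MonoidAlgebra.smul_single', mul_one]
    rw [hrep]
    apply Submodule.sum_mem
    intro v hv
    apply Submodule.smul_mem
    apply hKnil
    apply mono_mem_algPow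
    · omega
    · have h1 := hsupp v hv
      have h2 : (v * w).length = v.length + w.length := rfl
      have h3 : v.length = γ.sum fun _ n => n := by
        rw [← h1, multideg_sum_eq_length]
      omega
  · have hwl := w.length_pos
    have hlt : γ.support.card < Y.card := by
      have := card_support_le_sum γ
      omega
    have hex : ∃ x ∈ Y, x ∉ γ.support := by
      by_contra hcon
      push_neg at hcon
      exact absurd (Finset.card_le_card fun x hx => hcon x hx) (not_le.mpr hlt)
    obtain ⟨x, hxY, hxs⟩ := hex
    have hx0 : γ x = 0 := Finsupp.notMem_support_iff.mp hxs
    have hgx : g * mono 𝔽 (FreeMagma.of x) ∈ K := by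
      have h := hKmh _ (hf x hxY) (γ + multideg (FreeMagma.of x))
      rw [of_eq_mono, mhComponent_mul_mono] at h
      exact h
    have h2 := hKfi (endo 𝔽 (mono 𝔽 w) x) _ hgx
    rw [map_mul, endo_fix _ _ g (fun v hv => by rw [hsupp v hv]; exact hx0), ← of_eq_mono,
      endo_of_self] at h2
    exact h2

lemma key_left {𝔽 : Type*} [Field 𝔽] {X : Type*} {c : ℕ}
    {K : Submodule 𝔽 (FreeNonUnitalNonAssocAlgebra 𝔽 X)}
    (hKideal : IsAlgIdeal 𝔽 K) (hKfi : FullyInvariant 𝔽 K) (hKmh : Multihomogeneous 𝔽 K)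
    (hKnil : algPow 𝔽 (FreeNonUnitalNonAssocAlgebra 𝔽 X) (c + 1) ≤ K)
    {Y : Finset X} (hY : Y.card = c + 1)
    (f : FreeNonUnitalNonAssocAlgebra 𝔽 X)
    (hf : ∀ x ∈ Y, FreeNonUnitalNonAssocAlgebra.of 𝔽 x * f ∈ K)
    (w : FreeMagma X) : mono 𝔽 w * f ∈ K := by
  rw [← sum_mhComponent f, Finset.mul_sum]
  apply Submodule.sum_mem
  intro γ _
  set g := mhComponent f γ with hg
  have hsupp : ∀ v ∈ g.coeff.support, multideg v = γ := fun v hv => mhComponent_support f γ v hv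
  by_cases hcase : c + 1 ≤ (γ.sum fun _ n => n) + w.length
  · have hrep : mono 𝔽 w * g = ∑ v ∈ g.coeff.support, g.coeff v • mono 𝔽 (w * v) := by
      conv_lhs => rw [← MonoidAlgebra.sum_coeff_single g]
      rw [Finsupp.sum, Finset.mul_sum]
      refine Finset.sum_congr rfl fun v hv => ?_
      rw [mono_mul, ← mul_smul_comm]
      congr 1
      rw [mono, MonoidAlgebra.smul_single', mul_one]
    rw [hrep]
    apply Submodule.sum_mem
    intro v hv
    apply Submodule.smul_mem
    apply hKnil
    apply mono_mem_algPow
    · omega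
    · have h1 := hsupp v hv
      have h2 : (w * v).length = w.length + v.length := rfl
      have h3 : v.length = γ.sum fun _ n => n := by
        rw [← h1, multideg_sum_eq_length]
      omega
  · have hwl := w.length_pos
    have hlt : γ.support.card < Y.card := by
      have := card_support_le_sum γ
      omega
    have hex : ∃ x ∈ Y, x ∉ γ.support := by
      by_contra hcon
      push_neg at hcon
      exact absurd (Finset.card_le_card fun x hx => hcon x hx) (not_le.mpr hlt)
    obtain ⟨x, hxY, hxs⟩ := hex
    have hx0 : γ x = 0 := Finsupp.notMem_support_iff.mp hxs
    have hgx : mono 𝔽 (FreeMagma.of x) * g ∈ K := by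
      have h := hKmh _ (hf x hxY) (multideg (FreeMagma.of x) + γ)
      rw [of_eq_mono, mono_mul_mhComponent] at h
      exact h
    have h2 := hKfi (endo 𝔽 (mono 𝔽 w) x) _ hgx
    rw [map_mul, ← of_eq_mono, endo_of_self,
      endo_fix _ _ g (fun v hv => by rw [hsupp v hv]; exact hx0)] at h2
    exact h2


/-- Let `F = 𝓕(X)/K` with `K` a fully invariant multihomogeneous ideal
containing `𝓕(X)^{c+1}`, and `Y ⊆ X` with `|Y| = c+1` (so `X` has more than `c` elements).
If `u ∈ F` satisfies `u·x̄ = 0` for all `x ∈ Y`, then `u·F = 0`; similarly for the other side. -/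
theorem statement9 (𝔽 : Type*) [Field 𝔽] (X : Type*) (c : ℕ) (hc : 1 ≤ c)
    (K : Submodule 𝔽 (FreeNonUnitalNonAssocAlgebra 𝔽 X))
    (hKideal : IsAlgIdeal 𝔽 K) (hKfi : FullyInvariant 𝔽 K) (hKmh : Multihomogeneous 𝔽 K)
    (hKnil : algPow 𝔽 (FreeNonUnitalNonAssocAlgebra 𝔽 X) (c + 1) ≤ K)
    (F : Type*) [NonUnitalNonAssocSemiring F] [Module 𝔽 F]
    [SMulCommClass 𝔽 F F] [IsScalarTower 𝔽 F F]
    (π : FreeNonUnitalNonAssocAlgebra 𝔽 X →ₙₐ[𝔽] F)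
    (hπ : Function.Surjective π) (hπker : ∀ x, π x = 0 ↔ x ∈ K)
    (Y : Finset X) (hY : Y.card = c + 1) (u : F) :
    ((∀ x ∈ Y, u * π (FreeNonUnitalNonAssocAlgebra.of 𝔽 x) = 0) → ∀ v : F, u * v = 0) ∧
    ((∀ x ∈ Y, π (FreeNonUnitalNonAssocAlgebra.of 𝔽 x) * u = 0) → ∀ v : F, v * u = 0) := by
  constructor
  · intro hu v
    obtain ⟨f, hfu⟩ := hπ u
    obtain ⟨g, hgv⟩ := hπ v
    have hf : ∀ x ∈ Y, f * FreeNonUnitalNonAssocAlgebra.of 𝔽 x ∈ K := by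
      intro x hx
      apply (hπker _).mp
      rw [map_mul, hfu]
      exact hu x hx
    have hfg : f * g ∈ K := by
      rw [← MonoidAlgebra.sum_coeff_single g, Finsupp.sum, Finset.mul_sum]
      apply Submodule.sum_mem
      intro v hv
      have hrw : f * (MonoidAlgebra.single v (g.coeff v) : FreeNonUnitalNonAssocAlgebra 𝔽 X)
          = g.coeff v • (f * mono 𝔽 v) := by
        rw [show (MonoidAlgebra.single v (g.coeff v) : FreeNonUnitalNonAssocAlgebra 𝔽 X)
            = g.coeff v • mono 𝔽 v from by rw [mono, MonoidAlgebra.smul_single', mul_one],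
          mul_smul_comm]
      rw [hrw]
      exact Submodule.smul_mem _ _ (key_right hKideal hKfi hKmh hKnil hY f hf v)
    rw [← hfu, ← hgv, ← map_mul]
    exact (hπker _).mpr hfg
  · intro hu v
    obtain ⟨f, hfu⟩ := hπ u
    obtain ⟨g, hgv⟩ := hπ v
    have hf : ∀ x ∈ Y, FreeNonUnitalNonAssocAlgebra.of 𝔽 x * f ∈ K := by
      intro x hx
      apply (hπker _).mp
      rw [map_mul, hfu]
      exact hu x hx
    have hfg : g * f ∈ K := by
      rw [← MonoidAlgebra.sum_coeff_single g, Finsupp.sum, Finset.sum_mul]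
      apply Submodule.sum_mem
      intro v hv
      have hrw : (MonoidAlgebra.single v (g.coeff v) : FreeNonUnitalNonAssocAlgebra 𝔽 X) * f
          = g.coeff v • (mono 𝔽 v * f) := by
        rw [show (MonoidAlgebra.single v (g.coeff v) : FreeNonUnitalNonAssocAlgebra 𝔽 X)
            = g.coeff v • mono 𝔽 v from by rw [mono, MonoidAlgebra.smul_single', mul_one],
          smul_mul_assoc]
      rw [hrw]
      exact Submodule.smul_mem _ _ (key_left hKideal hKfi hKmh hKnil hY f hf v)
    rw [← hfu, ← hgv, ← map_mul]
    exact (hπker _).mpr hfg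
end
end

section
/- For every c ≥ 1 there exist real constants κ₁, κ₂ > 0 with the following property. Let 𝔽 be a field and W a fully invariant ideal of the free nonassociative algebra 𝓕 over 𝔽 on a countably infinite set of generators x₁, x₂, …, with 𝓕^{c+1} ⊆ W. For n ≥ 1 let 𝓕_n be the subalgebra generated by x₁, …, x_n (the free nonassociative algebra on n generators), K_n = W ∩ 𝓕_n, and F_n = 𝓕_n/K_n. Then for every n such that F_n^c ≠ 0, one has κ₁·n^c < dim_𝔽 F_n^c ≤ dim_𝔽 I(F_n) < κ₂·n^c, where I(F_n) is the annihilator of F_n. -/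
noncomputable section

open Function

universe u v

set_option linter.unusedSectionVars false

namespace Stmt10Aux


noncomputable instance {α : Type*} : DecidableEq (FreeMagma α) := fun _ _ => Classical.dec _

/-- Leaves of a magma word, in order. -/
def lvs {X : Type*} : FreeMagma X → List X
  | FreeMagma.of x => [x]
  | FreeMagma.mul a b => lvs a ++ lvs b

@[simp] lemma lvs_of {X : Type*} (x : X) : lvs (FreeMagma.of x) = [x] := rfl

@[simp] lemma lvs_mul {X : Type*} (a b : FreeMagma X) : lvs (a * b) = lvs a ++ lvs b := rfl

@[simp] lemma length_mul {X : Type*} (a b : FreeMagma X) :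
    (a * b).length = a.length + b.length := rfl

@[simp] lemma lvs_length {X : Type*} (w : FreeMagma X) : (lvs w).length = w.length := by
  induction w using FreeMagma.recOnMul with
  | ih1 x => rfl
  | ih2 a b ha hb => simp [lvs, FreeMagma.length, ha, hb]

lemma lvs_ne_nil {X : Type*} (w : FreeMagma X) : lvs w ≠ [] := by
  intro h
  have h1 := lvs_length w
  rw [h] at h1
  have h2 := w.length_pos
  simp at h1
  omega

lemma lvs_map {X Y : Type*} (f : X → Y) (w : FreeMagma X) :
    lvs (FreeMagma.map f w) = (lvs w).map f := by
  induction w using FreeMagma.recOnMul with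
  | ih1 x => rfl
  | ih2 a b ha hb => simp [map_mul, ha, hb]

@[simp] lemma length_map' {X Y : Type*} (f : X → Y) (w : FreeMagma X) :
    (FreeMagma.map f w).length = w.length := by
  rw [← lvs_length, lvs_map, List.length_map, lvs_length]

lemma lift_congr {X B : Type*} [Mul B] {f g : X → B} (w : FreeMagma X)
    (h : ∀ x ∈ lvs w, f x = g x) : FreeMagma.lift f w = FreeMagma.lift g w := by
  induction w using FreeMagma.recOnMul with
  | ih1 x => simpa using h x (by simp)
  | ih2 a b ha hb =>
    simp only [map_mul]
    rw [ha fun x hx => h x (by simp [hx]), hb fun x hx => h x (by simp [hx])]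

lemma map_congr {X Y : Type*} {f g : X → Y} (w : FreeMagma X)
    (h : ∀ x ∈ lvs w, f x = g x) : FreeMagma.map f w = FreeMagma.map g w :=
  lift_congr w (by intro x hx; simp only [Function.comp_apply, h x hx])

lemma map_map {X Y Z : Type*} (f : X → Y) (g : Y → Z) (w : FreeMagma X) :
    FreeMagma.map g (FreeMagma.map f w) = FreeMagma.map (g ∘ f) w := by
  induction w using FreeMagma.recOnMul with
  | ih1 x => rfl
  | ih2 a b ha hb => simp [map_mul, ha, hb]

lemma lift_map {X Y B : Type*} [Mul B] (f : X → Y) (g : Y → B) (w : FreeMagma X) :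
    FreeMagma.lift g (FreeMagma.map f w) = FreeMagma.lift (g ∘ f) w := by
  induction w using FreeMagma.recOnMul with
  | ih1 x => rfl
  | ih2 a b ha hb => simp [map_mul, ha, hb]

lemma lift_eq_zero {X B : Type*} [MulZeroClass B] (f : X → B) (w : FreeMagma X)
    {x : X} (hx : x ∈ lvs w) (hfx : f x = 0) : FreeMagma.lift f w = 0 := by
  induction w using FreeMagma.recOnMul with
  | ih1 y => simp at hx; subst hx; simpa using hfx
  | ih2 a b ha hb =>
    simp only [lvs_mul, List.mem_append] at hx
    rcases hx with hx | hx
    · rw [map_mul, ha hx, zero_mul]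
    · rw [map_mul, hb hx, mul_zero]

lemma freeMagmaMap_surjective {X Y : Type*} {f : X → Y} (hf : Function.Surjective f) :
    Function.Surjective (FreeMagma.map f) := by
  intro w
  induction w using FreeMagma.recOnMul with
  | ih1 y => obtain ⟨x, rfl⟩ := hf y; exact ⟨FreeMagma.of x, rfl⟩
  | ih2 a b ha hb =>
    obtain ⟨a', rfl⟩ := ha; obtain ⟨b', rfl⟩ := hb
    exact ⟨a' * b', map_mul _ _ _⟩

/-- Relabel the leaves of a magma word by consecutive natural numbers starting at `k`. -/
def label {X : Type*} : FreeMagma X → ℕ → FreeMagma ℕ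
  | FreeMagma.of _, k => FreeMagma.of k
  | FreeMagma.mul a b, k => FreeMagma.mul (label a k) (label b (k + a.length))

@[simp] lemma lvs_label {X : Type*} (w : FreeMagma X) (k : ℕ) :
    lvs (label w k) = List.range' k w.length := by
  induction w using FreeMagma.recOnMul generalizing k with
  | ih1 x => rfl
  | ih2 a b ha hb =>
    show lvs (label a k) ++ lvs (label b (k + a.length)) = _
    rw [ha, hb]
    rw [show (a * b).length = b.length + a.length from Nat.add_comm _ _]
    rw [List.range'_append_1, Nat.add_comm]

@[simp] lemma length_label {X : Type*} (w : FreeMagma X) (k : ℕ) :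
    (label w k).length = w.length := by
  rw [← lvs_length, lvs_label, List.length_range']

lemma mem_range'_iff {s n i : ℕ} : i ∈ List.range' s n ↔ s ≤ i ∧ i < s + n := by
  rw [List.mem_range']
  constructor
  · rintro ⟨j, hj, rfl⟩; omega
  · rintro ⟨h1, h2⟩; exact ⟨i - s, by omega, by omega⟩

lemma map_label {X : Type*} (w : FreeMagma X) (k : ℕ) :
    ∃ f : ℕ → X, FreeMagma.map f (label w k) = w := by
  induction w using FreeMagma.recOnMul generalizing k with
  | ih1 x => exact ⟨fun _ => x, rfl⟩
  | ih2 a b ha hb =>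
    obtain ⟨f₁, hf₁⟩ := ha k
    obtain ⟨f₂, hf₂⟩ := hb (k + a.length)
    refine ⟨fun i => if i < k + a.length then f₁ i else f₂ i, ?_⟩
    show FreeMagma.map _ (label a k) * FreeMagma.map _ (label b (k + a.length)) = a * b
    rw [map_congr (f := fun i => if i < k + a.length then f₁ i else f₂ i) (g := f₁)
        (label a k) ?_, hf₁,
      map_congr (f := fun i => if i < k + a.length then f₁ i else f₂ i) (g := f₂)
        (label b (k + a.length)) ?_, hf₂]
    · intro x hx
      rw [lvs_label, mem_range'_iff] at hx
      simp only [if_neg (by omega : ¬ x < k + a.length)]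
    · intro x hx
      rw [lvs_label, mem_range'_iff] at hx
      simp only [if_pos (by omega : x < k + a.length)]



universe u1 u2

section AlgPowLemmas

variable {R : Type*} [Semiring R] {A : Type u1} {B : Type u2}
  [NonUnitalNonAssocSemiring A] [Module R A] [IsScalarTower R A A] [SMulCommClass R A A]
  [NonUnitalNonAssocSemiring B] [Module R B] [IsScalarTower R B B] [SMulCommClass R B B]

lemma mul_span_span_mem {S T : Set A} {U : Submodule R A}
    (h : ∀ s ∈ S, ∀ t ∈ T, s * t ∈ U) {x y : A}
    (hx : x ∈ Submodule.span R S) (hy : y ∈ Submodule.span R T) : x * y ∈ U := by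
  induction hx using Submodule.span_induction generalizing y with
  | mem s hs =>
    induction hy using Submodule.span_induction with
    | mem t ht => exact h s hs t ht
    | zero => rw [mul_zero]; exact U.zero_mem
    | add y₁ y₂ _ _ h1 h2 => rw [mul_add]; exact U.add_mem h1 h2
    | smul r y _ h1 => rw [mul_smul_comm]; exact U.smul_mem r h1
  | zero => rw [zero_mul]; exact U.zero_mem
  | add x₁ x₂ _ _ h1 h2 => rw [add_mul]; exact U.add_mem (h1 hy) (h2 hy)
  | smul r x _ h1 => rw [smul_mul_assoc]; exact U.smul_mem r (h1 hy)

lemma mul_mem_algPow {i j : ℕ} {x y : A} (hx : x ∈ algPow R A i) (hy : y ∈ algPow R A j) :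
    x * y ∈ algPow R A (i + j) := by
  refine mul_span_span_mem ?_ hx hy
  rintro _ ⟨u, hu, rfl⟩ _ ⟨v, hv, rfl⟩
  exact Submodule.subset_span ⟨u * v, by simp [hu, hv], (map_mul (FreeMagma.lift id) u v).symm⟩

lemma lift_id_mem_algPow : ∀ (w : FreeMagma A) (k : ℕ), 1 ≤ k → k ≤ w.length →
    FreeMagma.lift id w ∈ algPow R A k := by
  intro w
  induction w using FreeMagma.recOnMul with
  | ih1 a =>
    intro k h1 h2
    have : k = 1 := by simpa [FreeMagma.length] using Nat.le_antisymm h2 h1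
    subst this
    exact Submodule.subset_span ⟨FreeMagma.of a, rfl, rfl⟩
  | ih2 a b ha hb =>
    intro k h1 h2
    rcases Nat.lt_or_ge k 2 with hk | hk
    · have : k = 1 := by omega
      subst this
      exact Submodule.subset_span ⟨FreeMagma.of (FreeMagma.lift id (a * b)), rfl, rfl⟩
    · have hla := a.length_pos
      have hlb := b.length_pos
      have hlen : (a * b).length = a.length + b.length := rfl
      set k₁ := min a.length (k - 1) with hk₁
      have h₁a : 1 ≤ k₁ := by omega
      have h₁b : k₁ ≤ a.length := by omega
      have h₂a : 1 ≤ k - k₁ := by omega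
      have h₂b : k - k₁ ≤ b.length := by omega
      have : FreeMagma.lift id a * FreeMagma.lift id b ∈ algPow R A (k₁ + (k - k₁)) :=
        mul_mem_algPow (ha k₁ h₁a h₁b) (hb (k - k₁) h₂a h₂b)
      rw [show k₁ + (k - k₁) = k by omega] at this
      rw [map_mul]
      exact this

lemma algPow_one_eq_top : algPow R A 1 = ⊤ := by
  rw [eq_top_iff]
  intro a _
  exact Submodule.subset_span ⟨FreeMagma.of a, rfl, rfl⟩

lemma lift_id_map (φ : A →ₙₐ[R] B) (w : FreeMagma A) :
    φ (FreeMagma.lift id w) = FreeMagma.lift id (FreeMagma.map (⇑φ) w) := by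
  induction w using FreeMagma.recOnMul with
  | ih1 a => rfl
  | ih2 a b ha hb => rw [map_mul, map_mul, map_mul, map_mul, ha, hb]

lemma map_algPow_le (φ : A →ₙₐ[R] B) (k : ℕ) :
    Submodule.map (φ : A →ₗ[R] B) (algPow R A k) ≤ algPow R B k := by
  rw [algPow, Submodule.map_span, Submodule.span_le]
  rintro _ ⟨_, ⟨w, hw, rfl⟩, rfl⟩
  refine Submodule.subset_span ⟨FreeMagma.map (⇑φ) w, ?_, ?_⟩
  · rw [length_map', hw]
  · exact (lift_id_map φ w).symm

lemma map_algPow_eq (φ : A →ₙₐ[R] B) (hφ : Function.Surjective ⇑φ) (k : ℕ) :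
    Submodule.map (φ : A →ₗ[R] B) (algPow R A k) = algPow R B k := by
  refine le_antisymm (map_algPow_le φ k) ?_
  rw [algPow, Submodule.span_le]
  rintro _ ⟨w', hw', rfl⟩
  obtain ⟨w, rfl⟩ := freeMagmaMap_surjective hφ w'
  rw [← lift_id_map φ w]
  refine Submodule.mem_map_of_mem (Submodule.subset_span ⟨w, ?_, rfl⟩)
  rw [← hw', length_map']

end AlgPowLemmas

section FreeAlg

variable (R : Type*) [CommSemiring R] {X : Type*}

/-- The monomial attached to a magma word. -/
def mono (w : FreeMagma X) : FreeNonUnitalNonAssocAlgebra R X :=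
  MonoidAlgebra.ofMagma R (FreeMagma X) w

lemma mono_mul (u v : FreeMagma X) : mono R (u * v) = mono R u * mono R v :=
  map_mul (MonoidAlgebra.ofMagma R (FreeMagma X)) u v

lemma mono_eq_lift (w : FreeMagma X) :
    mono R w = FreeMagma.lift (FreeNonUnitalNonAssocAlgebra.of R) w := by
  induction w using FreeMagma.recOnMul with
  | ih1 x => rfl
  | ih2 a b ha hb => rw [mono_mul, map_mul, ha, hb]

variable {A : Type u1} [NonUnitalNonAssocSemiring A]
  [Module R A] [IsScalarTower R A A] [SMulCommClass R A A]

lemma hom_mono (φ : FreeNonUnitalNonAssocAlgebra R X →ₙₐ[R] A) (w : FreeMagma X) :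
    φ (mono R w) = FreeMagma.lift (fun x => φ (FreeNonUnitalNonAssocAlgebra.of R x)) w := by
  induction w using FreeMagma.recOnMul with
  | ih1 x => rfl
  | ih2 a b ha hb => rw [mono_mul, map_mul, map_mul, ha, hb]

lemma mono_mem_algPow {k : ℕ} (w : FreeMagma X) (h1 : 1 ≤ k) (h2 : k ≤ w.length) :
    mono R w ∈ algPow R (FreeNonUnitalNonAssocAlgebra R X) k := by
  have : mono R w = FreeMagma.lift id (FreeMagma.map (FreeNonUnitalNonAssocAlgebra.of R) w) := by
    rw [lift_map, mono_eq_lift]; rfl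
  rw [this]
  exact lift_id_mem_algPow _ k h1 (by rwa [length_map'])

lemma span_range_mono :
    Submodule.span R (Set.range (mono R : FreeMagma X → FreeNonUnitalNonAssocAlgebra R X)) = ⊤ := by
  rw [eq_top_iff]
  intro f _
  have hf : f = f.coeff.sum fun w c => c • mono R w := by
    conv_lhs => rw [← MonoidAlgebra.sum_coeff_single f]
    refine Finsupp.sum_congr fun w _ => ?_
    rw [show (mono R w : FreeNonUnitalNonAssocAlgebra R X) = MonoidAlgebra.single w 1 from rfl,
      MonoidAlgebra.smul_single, smul_eq_mul, mul_one]
  rw [hf]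
  exact Submodule.sum_mem _ fun w _ =>
    Submodule.smul_mem _ _ (Submodule.subset_span ⟨w, rfl⟩)

lemma algPow_free_eq_span (k : ℕ) (hk : 1 ≤ k) :
    algPow R (FreeNonUnitalNonAssocAlgebra R X) k =
      Submodule.span R {f | ∃ w : FreeMagma X, k ≤ w.length ∧ mono R w = f} := by
  refine le_antisymm ?_ ?_
  · rw [algPow, Submodule.span_le]
    rintro _ ⟨u, hu, rfl⟩
    subst hu
    clear hk
    induction u using FreeMagma.recOnMul with
    | ih1 a =>
      have h1 : Set.range (mono R : FreeMagma X → FreeNonUnitalNonAssocAlgebra R X) ⊆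
          {f | ∃ w : FreeMagma X, (FreeMagma.of a).length ≤ w.length ∧ mono R w = f} := by
        rintro _ ⟨w, rfl⟩
        exact ⟨w, w.length_pos, rfl⟩
      have := Submodule.span_mono (R := R) h1
      rw [span_range_mono] at this
      exact this (Submodule.mem_top (R := R) (x := a))
    | ih2 a b ha hb =>
      rw [map_mul]
      refine mul_span_span_mem ?_ ha hb
      rintro _ ⟨u, hu, rfl⟩ _ ⟨v, hv, rfl⟩
      rw [← mono_mul]
      refine Submodule.subset_span ⟨u * v, ?_, rfl⟩
      show (a * b).length ≤ (u * v).length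
      show a.length + b.length ≤ u.length + v.length
      omega
  · rw [Submodule.span_le]
    rintro _ ⟨w, hw, rfl⟩
    exact mono_mem_algPow R w hk hw

end FreeAlg

end Stmt10Aux
namespace Stmt10Aux

/-- Finite set containing all magma words of length `d` over `Fin n`. -/
def Efin (n : ℕ) : ℕ → Finset (FreeMagma (Fin n))
  | 0 => ∅
  | 1 => Finset.univ.image FreeMagma.of
  | (d+2) => (Finset.Ioo 0 (d+2)).attach.biUnion fun i =>
      ((Efin n i.1) ×ˢ (Efin n (d + 2 - i.1))).image fun p => p.1 * p.2
  decreasing_by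
  · exact (Finset.mem_Ioo.mp i.2).2
  · have h := Finset.mem_Ioo.mp i.2; omega

/-- Upper bound coefficients for counting magma words. -/
def bD : ℕ → ℕ
  | 0 => 0
  | 1 => 1
  | (d+2) => (Finset.Ioo 0 (d+2)).attach.sum fun i => bD i.1 * bD (d + 2 - i.1)
  decreasing_by
  · exact (Finset.mem_Ioo.mp i.2).2
  · have h := Finset.mem_Ioo.mp i.2; omega

lemma mem_Efin {n : ℕ} : ∀ w : FreeMagma (Fin n), w ∈ Efin n w.length := by
  intro w
  induction w using FreeMagma.recOnMul with
  | ih1 x => simp [Efin, FreeMagma.length]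
  | ih2 a b ha hb =>
    have hla := a.length_pos
    have hlb := b.length_pos
    have hd : (a * b).length = (a.length + b.length - 2) + 2 := by
      show a.length + b.length = _
      omega
    rw [hd, Efin]
    rw [Finset.mem_biUnion]
    refine ⟨⟨a.length, ?_⟩, Finset.mem_attach _ _, ?_⟩
    · rw [Finset.mem_Ioo]; omega
    · rw [Finset.mem_image]
      refine ⟨(a, b), ?_, rfl⟩
      rw [Finset.mem_product]
      refine ⟨ha, ?_⟩
      have : a.length + b.length - 2 + 2 - a.length = b.length := by omega
      rw [this]
      exact hb

lemma card_Efin (n : ℕ) : ∀ d : ℕ, (Efin n d).card ≤ bD d * n ^ d := by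
  intro d
  induction d using Nat.strong_induction_on with
  | _ d ih =>
    match d with
    | 0 => simp [Efin]
    | 1 =>
      rw [Efin, bD]
      calc (Finset.univ.image (FreeMagma.of (α := Fin n))).card
          ≤ (Finset.univ : Finset (Fin n)).card := Finset.card_image_le
        _ = n := Finset.card_univ.trans (Fintype.card_fin n)
        _ ≤ 1 * n ^ 1 := le_of_eq (by ring)
    | (d+2) =>
      rw [Efin, bD]
      calc ((Finset.Ioo 0 (d+2)).attach.biUnion fun i =>
            ((Efin n i.1) ×ˢ (Efin n (d + 2 - i.1))).image fun p => p.1 * p.2).card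
          ≤ (Finset.Ioo 0 (d+2)).attach.sum fun i =>
            (((Efin n i.1) ×ˢ (Efin n (d + 2 - i.1))).image fun p => p.1 * p.2).card :=
            Finset.card_biUnion_le
        _ ≤ (Finset.Ioo 0 (d+2)).attach.sum fun i => (bD i.1 * bD (d + 2 - i.1)) * n ^ (d+2) := by
            refine Finset.sum_le_sum fun i _ => ?_
            have h2 := Finset.mem_Ioo.mp i.2
            calc (((Efin n i.1) ×ˢ (Efin n (d + 2 - i.1))).image fun p => p.1 * p.2).card
                ≤ ((Efin n i.1) ×ˢ (Efin n (d + 2 - i.1))).card := Finset.card_image_le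
              _ = (Efin n i.1).card * (Efin n (d + 2 - i.1)).card := Finset.card_product _ _
              _ ≤ (bD i.1 * n ^ i.1) * (bD (d + 2 - i.1) * n ^ (d + 2 - i.1)) :=
                  Nat.mul_le_mul (ih i.1 h2.2) (ih (d + 2 - i.1) (by omega))
              _ = (bD i.1 * bD (d + 2 - i.1)) * (n ^ i.1 * n ^ (d + 2 - i.1)) := by ring
              _ = (bD i.1 * bD (d + 2 - i.1)) * n ^ (d+2) := by
                  rw [← pow_add]
                  congr 2
                  omega
        _ = ((Finset.Ioo 0 (d+2)).attach.sum fun i => bD i.1 * bD (d + 2 - i.1)) * n ^ (d+2) :=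
            (Finset.sum_mul _ _ _).symm

end Stmt10Aux
namespace Stmt10Aux

lemma lower_numeric (c n D : ℕ) (hc : 1 ≤ c) (hn : 1 ≤ n) (hD1 : 1 ≤ D)
    (hD2 : n.choose c ≤ D) :
    ((2 * (c:ℝ)) ^ c)⁻¹ * (n:ℝ) ^ c < (D:ℝ) := by
  have hc' : (1:ℝ) ≤ (c:ℝ) := by exact_mod_cast hc
  have h2c : (0:ℝ) < 2 * (c:ℝ) := by linarith
  rcases lt_or_ge n (2*c) with h | h
  · have h1 : ((n:ℝ)) ^ c < (2*(c:ℝ)) ^ c := by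
      refine pow_lt_pow_left₀ ?_ (by positivity) (by omega)
      exact_mod_cast h
    calc ((2*(c:ℝ))^c)⁻¹ * (n:ℝ)^c < ((2*(c:ℝ))^c)⁻¹ * (2*(c:ℝ))^c := by
          exact mul_lt_mul_of_pos_left h1 (by positivity)
      _ = 1 := inv_mul_cancel₀ (by positivity)
      _ ≤ D := by exact_mod_cast hD1
  · have h' : 2 * (c:ℝ) ≤ (n:ℝ) := by exact_mod_cast h
    have hcast : ((n + 1 - c : ℕ):ℝ) = (n:ℝ) + 1 - (c:ℝ) := by
      have hcn : c ≤ n + 1 := by omega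
      push_cast [hcn]
      ring
    have hchoose : (((n + 1 - c : ℕ):ℝ))^c / (Nat.factorial c : ℝ) ≤ (n.choose c : ℝ) := by
      have := Nat.pow_le_choose (α := ℝ) c n
      exact_mod_cast this
    have hfac : (0:ℝ) < (Nat.factorial c : ℝ) := by exact_mod_cast c.factorial_pos
    have hfle : (Nat.factorial c : ℝ) ≤ (c:ℝ)^c := by exact_mod_cast Nat.factorial_le_pow c
    have hA : (0:ℝ) ≤ (n:ℝ)/2 := by positivity
    have hAB : (n:ℝ)/2 < ((n + 1 - c : ℕ):ℝ) := by rw [hcast]; linarith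
    have heq : ((2*(c:ℝ))^c)⁻¹ * (n:ℝ)^c = ((n:ℝ)/2)^c / ((c:ℝ))^c := by
      have h2 : (2:ℝ)^c ≠ 0 := by positivity
      have hcc : ((c:ℝ))^c ≠ 0 := by positivity
      rw [mul_pow]
      field_simp
      rw [← mul_pow, mul_div_cancel₀ _ (two_ne_zero)]
    rw [heq]
    calc ((n:ℝ)/2)^c / ((c:ℝ))^c ≤ ((n:ℝ)/2)^c / (Nat.factorial c : ℝ) := by
          gcongr
      _ < (((n + 1 - c : ℕ):ℝ))^c / (Nat.factorial c : ℝ) := by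
          gcongr
      _ ≤ (n.choose c : ℝ) := hchoose
      _ ≤ (D:ℝ) := by exact_mod_cast hD2

end Stmt10Aux



/-- For every `c ≥ 1` there are constants `κ₁, κ₂ > 0` such that: for every
field `𝔽`, every fully invariant ideal `W` of the free nonassociative algebra on countably
many generators with `𝓕^{c+1} ⊆ W`, and every `n ≥ 1`, if `F_n = 𝓕_n/(W ∩ 𝓕_n)` (presented
below by a surjection `ε` whose kernel is the pullback of `W` along the canonical embedding
`𝓕_n ↪ 𝓕`), then whenever `F_n^c ≠ 0` one has
`κ₁ n^c < dim F_n^c ≤ dim I(F_n) < κ₂ n^c`. -/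
theorem statement10 (c : ℕ) (hc : 1 ≤ c) :
    ∃ κ₁ κ₂ : ℝ, 0 < κ₁ ∧ 0 < κ₂ ∧
      ∀ (𝔽 : Type u) [Field 𝔽],
        ∀ W : Submodule 𝔽 (FreeNonUnitalNonAssocAlgebra 𝔽 ℕ),
          IsAlgIdeal 𝔽 W → FullyInvariant 𝔽 W →
          algPow 𝔽 (FreeNonUnitalNonAssocAlgebra 𝔽 ℕ) (c + 1) ≤ W →
          ∀ n : ℕ, 1 ≤ n →
            ∀ (F : Type v) [NonUnitalNonAssocRing F] [Module 𝔽 F]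
              [SMulCommClass 𝔽 F F] [IsScalarTower 𝔽 F F],
              ∀ ε : FreeNonUnitalNonAssocAlgebra 𝔽 (Fin n) →ₙₐ[𝔽] F,
                Function.Surjective ε →
                (∀ x, ε x = 0 ↔
                  FreeNonUnitalNonAssocAlgebra.lift 𝔽
                    (fun i : Fin n => FreeNonUnitalNonAssocAlgebra.of 𝔽 (i : ℕ)) x ∈ W) →
                algPow 𝔽 F c ≠ ⊥ →
                  κ₁ * (n : ℝ) ^ c < (Module.finrank 𝔽 (algPow 𝔽 F c) : ℝ) ∧
                  Module.finrank 𝔽 (algPow 𝔽 F c) ≤ Module.finrank 𝔽 (annIdeal 𝔽 F) ∧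
                  (Module.finrank 𝔽 (annIdeal 𝔽 F) : ℝ) < κ₂ * (n : ℝ) ^ c := by
  classical
  refine ⟨((2 * (c:ℝ)) ^ c)⁻¹, (((Finset.range (c+1)).sum Stmt10Aux.bD : ℕ) : ℝ) + 1, ?_, ?_, ?_⟩
  · have hcR : (1:ℝ) ≤ (c:ℝ) := by exact_mod_cast hc
    have : (0:ℝ) < 2 * (c:ℝ) := by linarith
    exact inv_pos.mpr (pow_pos this c)
  · positivity
  intro 𝔽 _ W hWideal hWinv hWc n hn F _ _ _ _ ε hεsurj hε hPne
  have hn0 : 0 < n := hn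
  set Kb : ℕ := (Finset.range (c+1)).sum Stmt10Aux.bD with hKb
  set ι2 : FreeNonUnitalNonAssocAlgebra 𝔽 (Fin n) →ₙₐ[𝔽] FreeNonUnitalNonAssocAlgebra 𝔽 ℕ :=
    FreeNonUnitalNonAssocAlgebra.lift 𝔽
      (fun i : Fin n => FreeNonUnitalNonAssocAlgebra.of 𝔽 (i : ℕ)) with hι2
  have hε' : ∀ x, ε x = 0 ↔ ι2 x ∈ W := hε
  clear hε
  -- (1) ι2 on monomials
  have hι_mono : ∀ w : FreeMagma (Fin n),
      ι2 (Stmt10Aux.mono 𝔽 w) = Stmt10Aux.mono 𝔽 (FreeMagma.map (fun i : Fin n => (i:ℕ)) w) := by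
    intro w
    rw [Stmt10Aux.hom_mono, Stmt10Aux.mono_eq_lift, Stmt10Aux.lift_map]
    refine Stmt10Aux.lift_congr _ fun x _ => ?_
    simp [hι2, Function.comp]
  -- (2) monomials of high degree die
  have hmono_zero : ∀ w : FreeMagma (Fin n), c + 1 ≤ w.length → ε (Stmt10Aux.mono 𝔽 w) = 0 := by
    intro w hw
    rw [hε', hι_mono]
    refine hWc (Stmt10Aux.mono_mem_algPow 𝔽 _ (by omega) ?_)
    rwa [Stmt10Aux.length_map']
  -- (3) spanning finset of F
  set T : Finset F :=
    ((Finset.range (c+1)).biUnion (Stmt10Aux.Efin n)).image (fun w => ε (Stmt10Aux.mono 𝔽 w))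
    with hTdef
  have hT : Submodule.span 𝔽 (↑T : Set F) = ⊤ := by
    rw [eq_top_iff]
    intro y _
    obtain ⟨x, rfl⟩ := hεsurj y
    have hx2 : ε x ∈ Submodule.map (ε : FreeNonUnitalNonAssocAlgebra 𝔽 (Fin n) →ₗ[𝔽] F)
        (Submodule.span 𝔽 (Set.range (Stmt10Aux.mono 𝔽 :
          FreeMagma (Fin n) → FreeNonUnitalNonAssocAlgebra 𝔽 (Fin n)))) := by
      refine Submodule.mem_map_of_mem ?_
      rw [Stmt10Aux.span_range_mono]
      trivial
    rw [Submodule.map_span] at hx2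
    refine Submodule.span_le.mpr ?_ hx2
    rintro _ ⟨_, ⟨w, rfl⟩, rfl⟩
    show ε (Stmt10Aux.mono 𝔽 w) ∈ Submodule.span 𝔽 (↑T : Set F)
    rcases le_or_gt w.length c with hwc | hwc
    · refine Submodule.subset_span ?_
      rw [hTdef]
      simp only [Finset.coe_image, Set.mem_image, Finset.mem_coe, Finset.mem_biUnion]
      exact ⟨w, ⟨w.length, Finset.mem_range.mpr (by omega), Stmt10Aux.mem_Efin w⟩, rfl⟩
    · rw [hmono_zero w (by omega)]
      exact Submodule.zero_mem _
  haveI hFD : Module.Finite 𝔽 F := Module.finite_def.mpr ⟨T, hT⟩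
  -- (4) dimension bound for F
  have hdimF : Module.finrank 𝔽 F ≤ Kb * n ^ c := by
    have h1 : Module.finrank 𝔽 F ≤ T.card := by
      have := finrank_span_finset_le_card (R := 𝔽) T
      rw [Set.finrank, hT, finrank_top] at this
      exact this
    have h2 : T.card ≤ (Finset.range (c+1)).sum fun d => (Stmt10Aux.Efin n d).card :=
      le_trans Finset.card_image_le Finset.card_biUnion_le
    have h3 : ((Finset.range (c+1)).sum fun d => (Stmt10Aux.Efin n d).card) ≤
        (Finset.range (c+1)).sum fun d => Stmt10Aux.bD d * n ^ c := by
      refine Finset.sum_le_sum fun d hd => ?_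
      refine le_trans (Stmt10Aux.card_Efin n d) ?_
      refine Nat.mul_le_mul_left _ (Nat.pow_le_pow_right hn0 ?_)
      exact Nat.lt_succ_iff.mp (Finset.mem_range.mp hd)
    rw [← Finset.sum_mul] at h3
    rw [hKb]
    exact le_trans h1 (le_trans h2 h3)
  -- (5) algPow F (c+1) = ⊥
  have hPc1 : algPow 𝔽 F (c+1) = ⊥ := by
    rw [eq_bot_iff, ← Stmt10Aux.map_algPow_eq ε hεsurj (c+1)]
    rintro _ ⟨x, hx, rfl⟩
    have : ι2 x ∈ W := hWc (Stmt10Aux.map_algPow_le ι2 (c+1) ⟨x, hx, rfl⟩)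
    simpa using (hε' x).mpr this
  -- (6) algPow F c ≤ annIdeal F
  have hPann : algPow 𝔽 F c ≤ annIdeal 𝔽 F := by
    intro x hx a
    constructor
    · have : x * a ∈ algPow 𝔽 F (c + 1) :=
        Stmt10Aux.mul_mem_algPow hx (by rw [Stmt10Aux.algPow_one_eq_top]; trivial)
      rw [hPc1] at this
      simpa using this
    · have : a * x ∈ algPow 𝔽 F (1 + c) :=
        Stmt10Aux.mul_mem_algPow (by rw [Stmt10Aux.algPow_one_eq_top]; trivial) hx
      rw [show 1 + c = c + 1 by omega, hPc1] at this
      simpa using this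
  -- (8) a nonzero multihomogeneous monomial of degree c
  have hw₂ : ∃ w : FreeMagma (Fin n), w.length = c ∧ ε (Stmt10Aux.mono 𝔽 w) ≠ 0 := by
    by_contra hcon
    push_neg at hcon
    apply hPne
    rw [← Stmt10Aux.map_algPow_eq ε hεsurj c, Stmt10Aux.algPow_free_eq_span 𝔽 c hc,
      Submodule.map_span, Submodule.span_eq_bot]
    rintro _ ⟨_, ⟨w, hwlen, rfl⟩, rfl⟩
    show ε (Stmt10Aux.mono 𝔽 w) = 0
    rcases Nat.eq_or_lt_of_le hwlen with hl | hl
    · exact hcon w hl.symm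
    · exact hmono_zero w (by omega)
  obtain ⟨w₂, hw₂len, hw₂ne⟩ := hw₂
  -- (9) the labelled skeleton
  set u₀ : FreeMagma ℕ := Stmt10Aux.label w₂ 0 with hu₀
  have hu₀len : u₀.length = c := by rw [hu₀, Stmt10Aux.length_label, hw₂len]
  have hu₀lvs : Stmt10Aux.lvs u₀ = List.range' 0 c := by rw [hu₀, Stmt10Aux.lvs_label, hw₂len]
  obtain ⟨f₀, hf₀⟩ := Stmt10Aux.map_label w₂ 0
  -- (10) the family of monomials
  set ρ : {S : Finset (Fin n) // S.card = c} → ℕ → Fin n :=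
    fun S j => if h : j < c then ((S.1.orderIsoOfFin S.2) ⟨j, h⟩ : Fin n) else ⟨0, hn0⟩ with hρ
  set m : {S : Finset (Fin n) // S.card = c} → FreeMagma (Fin n) :=
    fun S => FreeMagma.map (ρ S) u₀ with hm
  set v : {S : Finset (Fin n) // S.card = c} → F :=
    fun S => ε (Stmt10Aux.mono 𝔽 (m S)) with hv
  have hρ_mem : ∀ S j, j < c → ρ S j ∈ S.1 := by
    intro S j hj
    simp only [hρ]
    rw [dif_pos hj]
    exact ((S.1.orderIsoOfFin S.2) ⟨j, hj⟩).2
  have hρ_inj : ∀ S j j', j < c → j' < c → ρ S j = ρ S j' → j = j' := by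
    intro S j j' hj hj' hjj
    simp only [hρ] at hjj
    rw [dif_pos hj, dif_pos hj'] at hjj
    have h2 := (S.1.orderIsoOfFin S.2).injective (Subtype.ext hjj)
    exact congrArg Fin.val h2
  have hρ_surj : ∀ S, ∀ x ∈ S.1, ∃ j, j < c ∧ ρ S j = x := by
    intro S x hx
    obtain ⟨i, hi⟩ := (S.1.orderIsoOfFin S.2).surjective ⟨x, hx⟩
    refine ⟨i.1, i.2, ?_⟩
    simp only [hρ]
    rw [dif_pos i.2]
    rw [show (⟨i.1, i.2⟩ : Fin c) = i from rfl, hi]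
  have hmlen : ∀ S, (m S).length = c := by
    intro S; rw [hm]; rw [Stmt10Aux.length_map', hu₀len]
  have hmlvs : ∀ S, Stmt10Aux.lvs (m S) = (List.range' 0 c).map (ρ S) := by
    intro S; rw [hm, Stmt10Aux.lvs_map, hu₀lvs]
  have hleaf_mem : ∀ S, ∀ x ∈ Stmt10Aux.lvs (m S), x ∈ S.1 := by
    intro S x hx
    rw [hmlvs, List.mem_map] at hx
    obtain ⟨j, hj, rfl⟩ := hx
    rw [Stmt10Aux.mem_range'_iff] at hj
    exact hρ_mem S j (by omega)
  have hleaf_surj : ∀ S, ∀ x ∈ S.1, x ∈ Stmt10Aux.lvs (m S) := by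
    intro S x hx
    obtain ⟨j, hj, rfl⟩ := hρ_surj S x hx
    rw [hmlvs, List.mem_map]
    exact ⟨j, Stmt10Aux.mem_range'_iff.mpr (by omega), rfl⟩
  -- endomorphism action on monomials
  have hendo : ∀ (g : ℕ → ℕ) (t : FreeMagma ℕ),
      (FreeNonUnitalNonAssocAlgebra.lift 𝔽
        (fun i : ℕ => FreeNonUnitalNonAssocAlgebra.of 𝔽 (g i))) (Stmt10Aux.mono 𝔽 t) =
      Stmt10Aux.mono 𝔽 (FreeMagma.map g t) := by
    intro g t
    rw [Stmt10Aux.hom_mono, Stmt10Aux.mono_eq_lift, Stmt10Aux.lift_map]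
    refine Stmt10Aux.lift_congr _ fun x _ => ?_
    simp [Function.comp]
  -- (11) none of the monomials lies in W
  have hmW : ∀ S, ι2 (Stmt10Aux.mono 𝔽 (m S)) ∉ W := by
    intro S hmem
    set θ : ℕ → ℕ := fun i =>
      if h : ∃ j, j < c ∧ ((ρ S j : Fin n) : ℕ) = i then (f₀ h.choose : ℕ) else 0 with hθ
    set ψ := FreeNonUnitalNonAssocAlgebra.lift 𝔽
      (fun i : ℕ => FreeNonUnitalNonAssocAlgebra.of 𝔽 (θ i)) with hψ
    have h1 : ψ (ι2 (Stmt10Aux.mono 𝔽 (m S))) ∈ W := hWinv ψ _ hmem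
    rw [hι_mono, hψ, hendo θ] at h1
    have hkey : FreeMagma.map θ (FreeMagma.map (fun i : Fin n => (i:ℕ)) (m S)) =
        FreeMagma.map (fun i : Fin n => (i:ℕ)) w₂ := by
      rw [hm, Stmt10Aux.map_map, Stmt10Aux.map_map, ← hf₀, Stmt10Aux.map_map]
      refine Stmt10Aux.map_congr _ fun j hj => ?_
      rw [hu₀lvs, Stmt10Aux.mem_range'_iff] at hj
      have hjc : j < c := by omega
      show θ ((ρ S j : Fin n) : ℕ) = ((f₀ j : Fin n) : ℕ)
      have hex : ∃ j', j' < c ∧ ((ρ S j' : Fin n) : ℕ) = ((ρ S j : Fin n) : ℕ) :=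
        ⟨j, hjc, rfl⟩
      simp only [hθ]
      rw [dif_pos hex]
      have hch := hex.choose_spec
      have : hex.choose = j := by
        refine hρ_inj S hex.choose j hch.1 hjc ?_
        exact Fin.val_injective hch.2
      rw [this]
    rw [hkey, ← hι_mono] at h1
    exact hw₂ne ((hε' _).mpr h1)
  -- membership of the family in algPow F c
  have hvP : ∀ S, v S ∈ algPow 𝔽 F c := by
    intro S
    refine Stmt10Aux.map_algPow_le ε c ⟨Stmt10Aux.mono 𝔽 (m S), ?_, rfl⟩
    exact Stmt10Aux.mono_mem_algPow 𝔽 _ hc (le_of_eq (hmlen S).symm)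
  -- (12) linear independence
  have hvind : LinearIndependent 𝔽 v := by
    rw [Fintype.linearIndependent_iff]
    intro g hg S₀
    by_contra hgS₀
    have hsum : ε (Finset.univ.sum fun S => g S • Stmt10Aux.mono 𝔽 (m S)) = 0 := by
      rw [map_sum]
      simp only [map_smul]
      exact hg
    have hWmem : ι2 (Finset.univ.sum fun S => g S • Stmt10Aux.mono 𝔽 (m S)) ∈ W :=
      (hε' _).mp hsum
    set gfun : ℕ → FreeNonUnitalNonAssocAlgebra 𝔽 ℕ := fun i =>
      if (∃ y ∈ S₀.1, (y:ℕ) = i) then FreeNonUnitalNonAssocAlgebra.of 𝔽 i else 0 with hgfun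
    set φ := FreeNonUnitalNonAssocAlgebra.lift 𝔽 gfun with hφdef
    have hgfun_in : ∀ y : Fin n, y ∈ S₀.1 →
        gfun ((y : Fin n) : ℕ) = FreeNonUnitalNonAssocAlgebra.of 𝔽 ((y : Fin n) : ℕ) := by
      intro y hy
      simp only [hgfun]
      rw [if_pos]
      exact ⟨y, hy, rfl⟩
    have hgfun_out : ∀ y : Fin n, y ∉ S₀.1 → gfun ((y : Fin n) : ℕ) = 0 := by
      intro y hy
      simp only [hgfun]
      rw [if_neg]
      rintro ⟨z, hz, hzy⟩
      exact hy (by rwa [Fin.val_injective hzy] at hz)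
    have h2 : φ (ι2 (Finset.univ.sum fun S => g S • Stmt10Aux.mono 𝔽 (m S))) ∈ W :=
      hWinv φ _ hWmem
    have hφmono : ∀ t : FreeMagma ℕ, φ (Stmt10Aux.mono 𝔽 t) = FreeMagma.lift gfun t := by
      intro t
      rw [Stmt10Aux.hom_mono]
      refine Stmt10Aux.lift_congr _ fun x _ => ?_
      simp [hφdef]
    have hterm : ∀ S, φ (ι2 (Stmt10Aux.mono 𝔽 (m S))) =
        if S = S₀ then ι2 (Stmt10Aux.mono 𝔽 (m S₀)) else 0 := by
      intro S
      rw [hι_mono, hφmono]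
      by_cases hS : S = S₀
      · subst hS
        rw [if_pos rfl]
        have : FreeMagma.lift gfun (FreeMagma.map (fun i : Fin n => (i:ℕ)) (m S)) =
            FreeMagma.lift (FreeNonUnitalNonAssocAlgebra.of 𝔽)
              (FreeMagma.map (fun i : Fin n => (i:ℕ)) (m S)) := by
          refine Stmt10Aux.lift_congr _ fun x hx => ?_
          rw [Stmt10Aux.lvs_map, List.mem_map] at hx
          obtain ⟨y, hy, rfl⟩ := hx
          have hyS : y ∈ S.1 := hleaf_mem S y hy
          exact hgfun_in y hyS
        rw [this, ← Stmt10Aux.mono_eq_lift, ← hι_mono]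
      · rw [if_neg hS]
        have hne : ∃ x ∈ S.1, x ∉ S₀.1 := by
          by_contra hsub
          push_neg at hsub
          exact hS (Subtype.ext (Finset.eq_of_subset_of_card_le hsub (le_of_eq (S₀.2.trans S.2.symm))))
        obtain ⟨x, hxS, hxS₀⟩ := hne
        refine Stmt10Aux.lift_eq_zero gfun _ (x := (x:ℕ)) ?_ (hgfun_out x hxS₀)
        rw [Stmt10Aux.lvs_map, List.mem_map]
        exact ⟨x, hleaf_surj S x hxS, rfl⟩
    rw [map_sum, map_sum] at h2
    have hsumeq : (Finset.univ.sum fun S => φ (ι2 (g S • Stmt10Aux.mono 𝔽 (m S)))) =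
        g S₀ • ι2 (Stmt10Aux.mono 𝔽 (m S₀)) := by
      have hsplit : ∀ S, g S • (if S = S₀ then ι2 (Stmt10Aux.mono 𝔽 (m S₀)) else 0) =
          (if S = S₀ then g S • ι2 (Stmt10Aux.mono 𝔽 (m S₀)) else 0) := fun S => by
        split <;> simp
      rw [Finset.sum_congr rfl (fun S _ => by
        rw [map_smul, map_smul, hterm S, hsplit S])]
      rw [Finset.sum_ite_eq' Finset.univ S₀ (fun S => g S • ι2 (Stmt10Aux.mono 𝔽 (m S₀)))]
      rw [if_pos (Finset.mem_univ S₀)]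
    rw [hsumeq] at h2
    have : ι2 (Stmt10Aux.mono 𝔽 (m S₀)) ∈ W := by
      have h3 := W.smul_mem (g S₀)⁻¹ h2
      rwa [smul_smul, inv_mul_cancel₀ hgS₀, one_smul] at h3
    exact hmW S₀ this
  -- (13) dimension lower bound
  have hcard : Fintype.card {S : Finset (Fin n) // S.card = c} = n.choose c := by
    rw [Fintype.card_finset_len, Fintype.card_fin]
  have hchoose_le : n.choose c ≤ Module.finrank 𝔽 (algPow 𝔽 F c) := by
    rw [← hcard]
    set v' : {S : Finset (Fin n) // S.card = c} → (algPow 𝔽 F c) := fun S => ⟨v S, hvP S⟩ with hv'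
    have hind' : LinearIndependent 𝔽 v' := by
      refine LinearIndependent.of_comp (algPow 𝔽 F c).subtype ?_
      exact hvind
    exact hind'.fintype_card_le_finrank
  have hrankpos : 1 ≤ Module.finrank 𝔽 (algPow 𝔽 F c) := by
    haveI : Nontrivial (algPow 𝔽 F c) := Submodule.nontrivial_iff_ne_bot.mpr hPne
    exact Module.finrank_pos
  refine ⟨?_, ?_, ?_⟩
  · exact Stmt10Aux.lower_numeric c n _ hc hn hrankpos hchoose_le
  · exact Submodule.finrank_mono hPann
  · have h1 : Module.finrank 𝔽 (annIdeal 𝔽 F) ≤ Kb * n ^ c :=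
      le_trans (Submodule.finrank_le _) hdimF
    have h2 : (1:ℝ) ≤ (n:ℝ) ^ c := one_le_pow₀ (by exact_mod_cast hn)
    have h3 : (Module.finrank 𝔽 (annIdeal 𝔽 F) : ℝ) ≤ (Kb:ℝ) * (n:ℝ) ^ c := by
      exact_mod_cast h1
    have : ((Kb:ℝ)) * (n:ℝ) ^ c + 1 ≤ ((Kb:ℝ) + 1) * (n:ℝ) ^ c := by nlinarith
    calc (Module.finrank 𝔽 (annIdeal 𝔽 F) : ℝ) ≤ (Kb:ℝ) * (n:ℝ) ^ c := h3
      _ < (Kb:ℝ) * (n:ℝ) ^ c + 1 := by linarith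
      _ ≤ ((Kb:ℝ) + 1) * (n:ℝ) ^ c := this
end
end

section
/- Let 𝔽 be a field, V a finite-dimensional 𝔽-vector space with dim_𝔽 V = m, and B : V → V a linear operator with rank_B(V) = r. Then for every integer ℓ with (2m + r)/3 ≤ ℓ ≤ m there exists a pair of subspaces U ⊆ W of V such that dim_𝔽 W = ℓ, dim_𝔽 U = m − ℓ, dim_𝔽 B(U) = m − ℓ, and V is the (internal) direct sum of W and B(U). -/
noncomputable section

open Function

section St14Aux
open Function Module Submodule
section st14vars
universe u
variable {𝔽 : Type*} [Field 𝔽]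

section aux
variable {V : Type u} [AddCommGroup V] [Module 𝔽 V]

lemma pow_fam_snoc (B : V →ₗ[𝔽] V) (v : V) (n : ℕ) :
    (fun i : Fin (n+1) => (B ^ (i : ℕ)) v) =
      Fin.snoc (fun i : Fin n => (B ^ (i : ℕ)) v) ((B ^ n) v) := by
  funext i
  induction i using Fin.lastCases with
  | last => simp
  | cast i => simp [Fin.snoc_castSucc]

lemma exists_cyclic_basis [FiniteDimensional 𝔽 V] (B : V →ₗ[𝔽] V) (v : V) :
    ∃ n : ℕ, LinearIndependent 𝔽 (fun i : Fin n => (B ^ (i : ℕ)) v) ∧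
      span 𝔽 (Set.range fun i : Fin n => (B ^ (i : ℕ)) v)
        = span 𝔽 (Set.range fun j : ℕ => (B ^ j) v) := by
  set S : Set ℕ :=
    {n | (B ^ n) v ∈ span 𝔽 (Set.range fun i : Fin n => (B ^ (i : ℕ)) v)} with hS
  have li : ∀ n : ℕ, (∀ j < n, j ∉ S) →
      LinearIndependent 𝔽 (fun i : Fin n => (B ^ (i : ℕ)) v) := by
    intro n
    induction n with
    | zero => intro _; exact linearIndependent_empty_type
    | succ n ih =>
      intro h
      rw [pow_fam_snoc, linearIndependent_fin_snoc]
      exact ⟨ih fun j hj => h j (hj.trans (Nat.lt_succ_self n)), h n (Nat.lt_succ_self n)⟩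
  have hSne : S.Nonempty := by
    by_contra h
    have h' : ∀ j, j ∉ S := fun j hj => h ⟨j, hj⟩
    have := (li (finrank 𝔽 V + 1) (fun j _ => h' j)).fintype_card_le_finrank
    simp at this
  set n := sInf S with hn
  have hnS : n ∈ S := Nat.sInf_mem hSne
  have hlt : ∀ j < n, j ∉ S := fun j hj => Nat.notMem_of_lt_sInf hj
  set L := span 𝔽 (Set.range fun i : Fin n => (B ^ (i : ℕ)) v) with hL
  have hBL : ∀ x ∈ L, B x ∈ L := by
    intro x hx
    have hmap : Submodule.map B L ≤ L := by
      rw [hL, Submodule.map_span, span_le]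
      rintro _ ⟨_, ⟨i, rfl⟩, rfl⟩
      by_cases hi : (i : ℕ) + 1 < n
      · refine subset_span ⟨⟨(i : ℕ) + 1, hi⟩, ?_⟩
        show (B ^ ((i : ℕ) + 1)) v = B ((B ^ (i : ℕ)) v)
        rw [pow_succ']; rfl
      · have hin : (i : ℕ) + 1 = n := by omega
        have hBn : (B ^ n) v ∈ L := hnS
        rw [← hin, pow_succ'] at hBn
        exact hBn
    exact hmap ⟨x, hx, rfl⟩
  have hnS' : (B ^ n) v ∈ L := hnS
  have hvL : v ∈ L := by
    rcases Nat.eq_zero_or_pos n with h0 | hpos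
    · rw [h0, pow_zero] at hnS'
      simpa using hnS'
    · have := subset_span (R := 𝔽) (s := Set.range fun i : Fin n => (B ^ (i : ℕ)) v)
        ⟨⟨0, hpos⟩, rfl⟩
      simpa using this
  have hmem : ∀ j : ℕ, (B ^ j) v ∈ L := by
    intro j
    induction j with
    | zero => simpa using hvL
    | succ j ih => rw [pow_succ']; exact hBL _ ih
  refine ⟨n, li n hlt, le_antisymm (span_le.2 ?_) (span_le.2 ?_)⟩
  · rintro _ ⟨i, rfl⟩; exact subset_span ⟨(i : ℕ), rfl⟩
  · rintro _ ⟨j, rfl⟩; exact hmem j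


lemma li_sum_of_quotient {ι κ : Type*} (M : Submodule 𝔽 V) (a : ι → V) (b : κ → V)
    (haM : ∀ i, a i ∈ M) (ha : LinearIndependent 𝔽 a)
    (hb : LinearIndependent 𝔽 (M.mkQ ∘ b)) :
    LinearIndependent 𝔽 (Sum.elim a b) := by
  rw [linearIndependent_sum]
  refine ⟨ha, LinearIndependent.of_comp M.mkQ hb, ?_⟩
  have h1 : span 𝔽 (Set.range a) ≤ M := span_le.2 (by rintro _ ⟨i, rfl⟩; exact haM i)
  refine Submodule.disjoint_def.2 fun x hxa hxb => ?_
  have hxM : x ∈ M := h1 hxa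
  obtain ⟨c, rfl⟩ := Finsupp.mem_span_range_iff_exists_finsupp.1 hxb
  have h0 : Finsupp.linearCombination 𝔽 (M.mkQ ∘ b) c = 0 := by
    rw [Finsupp.linearCombination_apply]
    have : (c.sum fun i r => r • M.mkQ (b i)) = M.mkQ (c.sum fun i r => r • b i) := by
      rw [map_finsuppSum]
      simp
    rw [show (fun i r => r • (M.mkQ ∘ b) i) = fun i r => r • M.mkQ (b i) from rfl, this]
    rw [Submodule.mkQ_apply, Submodule.Quotient.mk_eq_zero]
    exact hxM
  have hc := linearIndependent_iff.1 hb c h0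
  simp [hc]

lemma key (r : ℕ) :
    ∀ (V : Type u) [AddCommGroup V] [Module 𝔽 V] [FiniteDimensional 𝔽 V]
      (B : V →ₗ[𝔽] V) (s : Finset V), s.card ≤ r →
      (∀ W : Submodule 𝔽 V, ↑s ⊆ (W : Set V) → (∀ x ∈ W, B x ∈ W) → W = ⊤) →
      ∀ k : ℕ, 2 * k + r ≤ finrank 𝔽 V →
      ∃ u : Fin k → V, LinearIndependent 𝔽 (Sum.elim u (B ∘ u)) := by
  induction r with
  | zero =>
    intro V _ _ _ B s hcard hgen k hk
    have hV : (⊥ : Submodule 𝔽 V) = ⊤ := by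
      apply hgen
      · have : s = ∅ := Finset.card_eq_zero.1 (Nat.le_zero.1 hcard)
        simp [this]
      · intro x hx
        simp only [Submodule.mem_bot] at hx ⊢
        simp [hx]
    have hrk : finrank 𝔽 V = 0 := by
      rw [← finrank_top 𝔽 V, ← hV, finrank_bot]
    have hk0 : k = 0 := by omega
    subst hk0
    haveI : IsEmpty (Fin 0 ⊕ Fin 0) := by infer_instance
    exact ⟨fun i => 0, linearIndependent_empty_type⟩
  | succ r ih =>
    intro V _ _ _ B s hcard hgen k hk
    classical
    by_cases hsr : s.card ≤ r
    · exact ih V B s hsr hgen k (by omega)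
    have hcard' : s.card = r + 1 := le_antisymm hcard (not_le.1 hsr)
    obtain ⟨v, hv⟩ : s.Nonempty := Finset.card_pos.1 (by omega)
    set C : Submodule 𝔽 V := span 𝔽 (Set.range fun j : ℕ => (B ^ j) v) with hC
    have hCinv : ∀ x ∈ C, B x ∈ C := by
      intro x hx
      have hmap : Submodule.map B C ≤ C := by
        rw [hC, Submodule.map_span, span_le]
        rintro _ ⟨_, ⟨j, rfl⟩, rfl⟩
        refine subset_span ⟨j + 1, ?_⟩
        show (B ^ (j + 1)) v = B ((B ^ j) v)
        rw [pow_succ']; rfl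
      exact hmap ⟨x, hx, rfl⟩
    obtain ⟨n, hli, hspan⟩ := exists_cyclic_basis B v
    have hvC : v ∈ C := subset_span ⟨0, by simp⟩
    have hCfin : finrank 𝔽 C = n := by
      rw [hC, ← hspan, finrank_span_eq_card hli, Fintype.card_fin]
    set Q := V ⧸ C with hQ
    have hle : C ≤ C.comap B := fun x hx => hCinv x hx
    set Bq : Q →ₗ[𝔽] Q := Submodule.mapQ C C B hle with hBq
    have hQrank : finrank 𝔽 Q + n = finrank 𝔽 V := by
      rw [← hCfin]
      exact Submodule.finrank_quotient_add_finrank C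
    set t : Finset Q := (s.erase v).image C.mkQ with ht
    have htcard : t.card ≤ r := by
      calc t.card ≤ (s.erase v).card := Finset.card_image_le
      _ = r := by rw [Finset.card_erase_of_mem hv, hcard']; omega
    have hgenQ : ∀ W : Submodule 𝔽 Q, ↑t ⊆ (W : Set Q) → (∀ x ∈ W, Bq x ∈ W) → W = ⊤ := by
      intro W hWt hWinv
      have h1 : (s : Set V) ⊆ ↑(W.comap C.mkQ) := by
        intro x hx
        by_cases hxv : x = v
        · subst hxv
          show C.mkQ x ∈ W
          rw [Submodule.mkQ_apply, (Submodule.Quotient.mk_eq_zero C).2 hvC]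
          exact W.zero_mem
        · show C.mkQ x ∈ W
          apply hWt
          exact Finset.mem_coe.2 (Finset.mem_image_of_mem _ (Finset.mem_erase.2 ⟨hxv, hx⟩))
      have h2 : ∀ x ∈ W.comap C.mkQ, B x ∈ W.comap C.mkQ := by
        intro x hx
        show C.mkQ (B x) ∈ W
        have : C.mkQ (B x) = Bq (C.mkQ x) := by
          rw [hBq, Submodule.mkQ_apply, Submodule.mkQ_apply, Submodule.mapQ_apply]
        rw [this]
        exact hWinv _ hx
      have htop := hgen _ h1 h2
      have := Submodule.map_comap_eq_of_surjective (Submodule.mkQ_surjective C) W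
      rw [← this, htop, Submodule.map_top, Submodule.range_mkQ]
    set k₀ := min k (n / 2) with hk₀
    set k' := k - k₀ with hk'
    have huq : ∃ uq : Fin k' → Q, LinearIndependent 𝔽 (Sum.elim uq (Bq ∘ uq)) := by
      rcases Nat.eq_zero_or_pos k' with h0 | hpos
      · haveI : IsEmpty (Fin k') := by rw [h0]; infer_instance
        exact ⟨fun i => 0, linearIndependent_empty_type⟩
      · exact ih Q Bq t htcard hgenQ k' (by omega)
    obtain ⟨uq, hliq⟩ := huq
    have hlift : ∀ i : Fin k', ∃ x : V, C.mkQ x = uq i :=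
      fun i => Submodule.mkQ_surjective C (uq i)
    set u2 : Fin k' → V := fun i => (hlift i).choose with hu2
    have hu2spec : ∀ i, C.mkQ (u2 i) = uq i := fun i => (hlift i).choose_spec
    -- the a-family: powers of v
    set a : Fin k₀ ⊕ Fin k₀ → V :=
      Sum.elim (fun i => (B ^ (2 * (i : ℕ))) v) (fun i => (B ^ (2 * (i : ℕ) + 1)) v) with ha
    have haC : ∀ i, a i ∈ C := by
      rintro (i | i) <;> exact subset_span ⟨_, rfl⟩
    have hlia : LinearIndependent 𝔽 a := by
      have he : ∀ i : Fin k₀, 2 * (i : ℕ) + 1 < n := by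
        intro i; have := i.isLt; omega
      set e : Fin k₀ ⊕ Fin k₀ → Fin n :=
        Sum.elim (fun i => ⟨2 * (i : ℕ), by have := he i; omega⟩)
          (fun i => ⟨2 * (i : ℕ) + 1, he i⟩) with hee
      have hei : Injective e := by
        rintro (i | i) (j | j) h <;>
          simp only [hee, Sum.elim_inl, Sum.elim_inr, Fin.mk.injEq] at h <;>
          first
            | (exact congrArg Sum.inl (Fin.ext (by omega)))
            | (exact congrArg Sum.inr (Fin.ext (by omega)))
            | omega
      have : a = (fun i : Fin n => (B ^ (i : ℕ)) v) ∘ e := by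
        funext x
        rcases x with i | i <;> rfl
      rw [this]
      exact hli.comp e hei
    set bfam : Fin k' ⊕ Fin k' → V := Sum.elim u2 (B ∘ u2) with hbfam
    have hbq : C.mkQ ∘ bfam = Sum.elim uq (Bq ∘ uq) := by
      funext x
      rcases x with i | i
      · exact hu2spec i
      · show C.mkQ (B (u2 i)) = Bq (uq i)
        rw [← hu2spec i, hBq, Submodule.mkQ_apply, Submodule.mkQ_apply,
          Submodule.mapQ_apply]
    have hbigli : LinearIndependent 𝔽 (Sum.elim a bfam) :=
      li_sum_of_quotient C a bfam haC hlia (by rw [hbq]; exact hliq)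
    -- assemble
    set big : Fin k₀ ⊕ Fin k' → V := Sum.elim (fun i => (B ^ (2 * (i : ℕ))) v) u2 with hbig
    have hF : Sum.elim a bfam =
        (Sum.elim big (B ∘ big)) ∘ (Equiv.sumSumSumComm (Fin k₀) (Fin k₀) (Fin k') (Fin k')) := by
      funext x
      rcases x with (i | i) | (i | i)
      · rfl
      · show (B ^ (2 * (i : ℕ) + 1)) v = B ((B ^ (2 * (i : ℕ))) v)
        rw [pow_succ']; rfl
      · rfl
      · rfl
    have hFli : LinearIndependent 𝔽 (Sum.elim big (B ∘ big)) := by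
      rw [hF] at hbigli
      exact (linearIndependent_equiv _).1 hbigli
    have hkk : k = k₀ + k' := by omega
    set e2 : Fin k ≃ Fin k₀ ⊕ Fin k' := (finCongr hkk).trans finSumFinEquiv.symm with he2
    refine ⟨big ∘ e2, ?_⟩
    have : Sum.elim (big ∘ e2) (B ∘ (big ∘ e2)) =
        (Sum.elim big (B ∘ big)) ∘ (Equiv.sumCongr e2 e2) := by
      funext x; rcases x with i | i <;> rfl
    rw [this]
    exact (linearIndependent_equiv _).2 hFli


end aux
end st14vars

lemma st14_main (𝔽 : Type*) [Field 𝔽] (V : Type*) [AddCommGroup V] [Module 𝔽 V]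
    [FiniteDimensional 𝔽 V] (m r : ℕ) (hm : Module.finrank 𝔽 V = m)
    (B : V →ₗ[𝔽] V) (hr : endRank 𝔽 B = r)
    (ℓ : ℕ) (hℓ₁ : (2 * m + r : ℝ) / 3 ≤ (ℓ : ℝ)) (hℓ₂ : ℓ ≤ m) :
    ∃ U W : Submodule 𝔽 V, U ≤ W ∧
      Module.finrank 𝔽 W = ℓ ∧
      Module.finrank 𝔽 U = m - ℓ ∧
      Module.finrank 𝔽 (U.map B) = m - ℓ ∧
      W ⊓ U.map B = ⊥ ∧ W ⊔ U.map B = ⊤ := by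
  classical
  -- arithmetic
  have h3 : 2 * m + r ≤ 3 * ℓ := by
    have := (div_le_iff₀ (by norm_num : (0:ℝ) < 3)).1 hℓ₁
    have : (2 * m + r : ℝ) ≤ 3 * ℓ := by linarith
    exact_mod_cast this
  set k := m - ℓ with hkdef
  have hkr : 2 * k + r ≤ m := by omega
  -- a generating finset of minimal cardinality
  have hne : {c | ∃ s : Finset V, s.card = c ∧
      ∀ W : Submodule 𝔽 V, (↑s : Set V) ⊆ W → (∀ x ∈ W, B x ∈ W) → W = ⊤}.Nonempty := by
    obtain ⟨S, hS⟩ : (⊤ : Submodule 𝔽 V).FG := Module.finite_def.1 inferInstance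
    exact ⟨S.card, S, rfl, fun W h _ => top_unique (hS ▸ span_le.2 h)⟩
  obtain ⟨s, hscard, hsgen⟩ : ∃ s : Finset V, s.card = r ∧
      ∀ W : Submodule 𝔽 V, (↑s : Set V) ⊆ W → (∀ x ∈ W, B x ∈ W) → W = ⊤ := by
    have := Nat.sInf_mem hne
    rwa [show sInf _ = r from hr] at this
  obtain ⟨u, hu⟩ := key r V B s (le_of_eq hscard) hsgen k (by rw [hm]; exact hkr)
  obtain ⟨hu1, hu2, hdisj⟩ := linearIndependent_sum.1 hu
  have hul : (Sum.elim u (B ∘ u)) ∘ Sum.inl = u := rfl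
  have hur : (Sum.elim u (B ∘ u)) ∘ Sum.inr = B ∘ u := rfl
  rw [hul] at hu1
  rw [hur] at hu2
  rw [hul, hur] at hdisj
  set U : Submodule 𝔽 V := span 𝔽 (Set.range u) with hU
  have hBU : U.map B = span 𝔽 (Set.range (B ∘ u)) := by
    rw [hU, Submodule.map_span, ← Set.range_comp]
  have hUrk : finrank 𝔽 U = k := by
    rw [hU, finrank_span_eq_card hu1, Fintype.card_fin]
  have hBUrk : finrank 𝔽 (U.map B) = k := by
    rw [hBU, finrank_span_eq_card hu2, Fintype.card_fin]
  have hinf : U ⊓ U.map B = ⊥ := by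
    rw [hU, hBU]; exact disjoint_iff.1 hdisj
  have hDrk : finrank 𝔽 ↥(U ⊔ U.map B) = 2 * k := by
    have := Submodule.finrank_sup_add_finrank_inf_eq U (U.map B)
    rw [hinf, finrank_bot, hUrk, hBUrk] at this
    omega
  obtain ⟨Cc, hcompl⟩ := Submodule.exists_isCompl (U ⊔ U.map B)
  have hCcrk : finrank 𝔽 Cc = m - 2 * k := by
    have := Submodule.finrank_add_eq_of_isCompl hcompl
    rw [hDrk, hm] at this
    omega
  have hUCc : U ⊓ Cc = ⊥ := (hcompl.disjoint.mono_left le_sup_left).eq_bot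
  have hWrk : finrank 𝔽 ↥(U ⊔ Cc) = ℓ := by
    have := Submodule.finrank_sup_add_finrank_inf_eq U Cc
    rw [hUCc, finrank_bot, hUrk, hCcrk] at this
    omega
  have hWsup : (U ⊔ Cc) ⊔ U.map B = ⊤ := by
    rw [sup_right_comm, hcompl.codisjoint.eq_top]
  have hWinf : (U ⊔ Cc) ⊓ U.map B = ⊥ := by
    have h1 := Submodule.finrank_sup_add_finrank_inf_eq (U ⊔ Cc) (U.map B)
    rw [hWsup, finrank_top, hWrk, hBUrk, hm] at h1
    have : finrank 𝔽 ↥((U ⊔ Cc) ⊓ U.map B) = 0 := by omega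
    exact Submodule.finrank_eq_zero.1 this
  exact ⟨U, U ⊔ Cc, le_sup_left, hWrk, hUrk, hBUrk, hWinf, hWsup⟩

end St14Aux

/-- If `dim V = m` and `rank_B(V) = r`, then for every integer `ℓ` with
`(2m+r)/3 ≤ ℓ ≤ m` there are subspaces `U ⊆ W` with `dim W = ℓ`, `dim U = m − ℓ`,
`dim B(U) = m − ℓ`, and `V = W ⊕ B(U)` (internal direct sum). -/
theorem statement14 (𝔽 : Type*) [Field 𝔽] (V : Type*) [AddCommGroup V] [Module 𝔽 V]
    [FiniteDimensional 𝔽 V] (m r : ℕ) (hm : Module.finrank 𝔽 V = m)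
    (B : V →ₗ[𝔽] V) (hr : endRank 𝔽 B = r)
    (ℓ : ℕ) (hℓ₁ : (2 * m + r : ℝ) / 3 ≤ (ℓ : ℝ)) (hℓ₂ : ℓ ≤ m) :
    ∃ U W : Submodule 𝔽 V, U ≤ W ∧
      Module.finrank 𝔽 W = ℓ ∧
      Module.finrank 𝔽 U = m - ℓ ∧
      Module.finrank 𝔽 (U.map B) = m - ℓ ∧
      W ⊓ U.map B = ⊥ ∧ W ⊔ U.map B = ⊤ := by
  exact st14_main 𝔽 V m r hm B hr ℓ hℓ₁ hℓ₂
end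
end

section
/- Let V be a finite-dimensional vector space over a field 𝔽, written as an internal direct sum V = V₁ ⊕ … ⊕ V_t of subspaces, and let U₁, …, U_n be subspaces of V. Assume there is a natural number c such that for every j ∈ {1, …, t}, at most c of the subspaces U₁, …, U_n have nonzero projection onto V_j (with respect to the direct sum decomposition). Then dim_𝔽 U₁ + … + dim_𝔽 U_n ≤ c · dim_𝔽 (U₁ + … + U_n). -/
noncomputable section

open Function

/-- The projection onto the `j`-th summand of an internal direct sum decomposition
`M = V₁ ⊕ … ⊕ V_t`, as an endomorphism of `M`. -/
noncomputable def internalProj {𝔽 : Type*} [Field 𝔽] {M : Type*} [AddCommGroup M]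
    [Module 𝔽 M] {t : ℕ} {V : Fin t → Submodule 𝔽 M}
    (h : DirectSum.IsInternal V) (j : Fin t) : M →ₗ[𝔽] M :=
  (V j).subtype ∘ₗ (DirectSum.component 𝔽 (Fin t) (fun i => (V i : Type _)) j) ∘ₗ
    (LinearEquiv.ofBijective (DirectSum.coeLinearMap V) h).symm.toLinearMap

section auxProj
variable {𝔽 : Type*} [Field 𝔽] {M : Type*} [AddCommGroup M] [Module 𝔽 M]
  {t : ℕ} {V : Fin t → Submodule 𝔽 M} (h : DirectSum.IsInternal V)

lemma internalProj_apply_of_mem {k j : Fin t} {x : M} (hx : x ∈ V k) :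
    internalProj h j x = if j = k then x else 0 := by
  have he : (LinearEquiv.ofBijective (DirectSum.coeLinearMap V) h).symm x
      = DirectSum.of (fun i => (V i : Type _)) k ⟨x, hx⟩ := by
    apply (LinearEquiv.ofBijective (DirectSum.coeLinearMap V) h).injective
    rw [LinearEquiv.apply_symm_apply]
    exact (DirectSum.coeLinearMap_of V k ⟨x, hx⟩).symm
  rw [internalProj]
  simp only [LinearMap.coe_comp, comp_apply, LinearEquiv.coe_coe, he,
    DirectSum.component.of]
  rcases eq_or_ne j k with rfl | hjk
  all_goals rw [← DirectSum.apply_eq_component, DirectSum.of_apply]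
  · simp
  · simp [hjk, Ne.symm hjk]

lemma sum_internalProj (x : M) : ∑ j, internalProj h j x = x := by
  set e := LinearEquiv.ofBijective (DirectSum.coeLinearMap V) h with hedef
  have hx : x = e (e.symm x) := (e.apply_symm_apply x).symm
  conv_rhs => rw [hx]
  have : e.symm x = ∑ j, DirectSum.of (fun i => (V i : Type _)) j (e.symm x j) :=
    (DirectSum.sum_univ_of _).symm
  conv_rhs => rw [this]
  rw [map_sum]
  refine Finset.sum_congr rfl fun j _ => ?_
  rw [internalProj]
  simp only [LinearMap.coe_comp, comp_apply, LinearEquiv.coe_coe, hedef]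
  rw [show ∀ y, (LinearEquiv.ofBijective (DirectSum.coeLinearMap V) h) y = DirectSum.coeLinearMap V y
      from fun _ => rfl, DirectSum.coeLinearMap_of,
    ← DirectSum.apply_eq_component]
  rfl



lemma internalProj_mem (j : Fin t) (x : M) : internalProj h j x ∈ V j :=
  ((DirectSum.component 𝔽 (Fin t) (fun i => (V i : Type _)) j)
    ((LinearEquiv.ofBijective (DirectSum.coeLinearMap V) h).symm x)).2

end auxProj

/-- If `V = V₁ ⊕ … ⊕ V_t` is an internal direct sum and `U₁, …, U_n` are
subspaces such that for each `j` at most `c` of the `Uᵢ` have nonzero projection onto `V_j`,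
then `Σ dim Uᵢ ≤ c · dim(U₁ + … + U_n)`. -/
theorem statement16 (𝔽 : Type*) [Field 𝔽] (M : Type*) [AddCommGroup M] [Module 𝔽 M]
    [FiniteDimensional 𝔽 M] (t n : ℕ) (V : Fin t → Submodule 𝔽 M)
    (hV : DirectSum.IsInternal V) (U : Fin n → Submodule 𝔽 M) (c : ℕ)
    (hc : ∀ j : Fin t, ({i : Fin n | (U i).map (internalProj hV j) ≠ ⊥}).ncard ≤ c) :
    ∑ i, Module.finrank 𝔽 (U i) ≤ c * Module.finrank 𝔽 ↥(⨆ i, U i) := by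
  classical
  set W := ⨆ i, U i with hW
  set F : ℕ → Submodule 𝔽 M := fun k => ⨆ j : Fin t, ⨆ _ : (j : ℕ) < k, V j with hF
  have hFmono : Monotone F := fun a b hab =>
    iSup_mono fun j => iSup_le fun hj => le_iSup_of_le (hj.trans_le hab) le_rfl
  have hF0 : F 0 = ⊥ := by simp [hF]
  have hFt : F t = ⊤ := by
    have : F t = ⨆ j, V j := by
      simp [hF, Fin.is_lt]
    rw [this, hV.submodule_iSup_eq_top]
  have hVF : ∀ (j : Fin t) (k : ℕ), (j : ℕ) < k → V j ≤ F k := fun j k hj =>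
    le_iSup_of_le j (le_iSup_of_le hj le_rfl)
  have hker : ∀ (k : ℕ) (l : Fin t), k ≤ (l : ℕ) →
      F k ≤ LinearMap.ker (internalProj hV l) := by
    intro k l hkl
    refine iSup_le fun j => iSup_le fun hj x hx => ?_
    rw [LinearMap.mem_ker, internalProj_apply_of_mem hV hx, if_neg]
    intro hlj
    subst hlj
    omega
  have hUW : ∀ i, U i ≤ W := le_iSup U
  set d : Submodule 𝔽 M → ℕ → ℕ := fun X k => Module.finrank 𝔽 ↥(X ⊓ F k) with hd
  have hdmono : ∀ X, Monotone (d X) := fun X a b hab =>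
    Submodule.finrank_mono (inf_le_inf_left X (hFmono hab))
  have hd0 : ∀ X, d X 0 = 0 := by
    intro X
    simp [hd, hF0, finrank_bot]
  have hdt : ∀ X, d X t = Module.finrank 𝔽 X := by
    intro X
    show Module.finrank 𝔽 ↥(X ⊓ F t) = _
    rw [hFt, inf_top_eq]
  -- claim A
  have hA : ∀ (i : Fin n) (k : Fin t), (U i).map (internalProj hV k) = ⊥ →
      U i ⊓ F ((k : ℕ) + 1) = U i ⊓ F k := by
    intro i k hmap
    refine le_antisymm ?_ (inf_le_inf_left _ (hFmono (Nat.le_succ _)))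
    rintro x ⟨hxU, hxF⟩
    refine ⟨hxU, ?_⟩
    have hx : x = ∑ j, internalProj hV j x := (sum_internalProj hV x).symm
    rw [hx]
    refine Submodule.sum_mem _ fun j _ => ?_
    rcases lt_trichotomy (j : ℕ) (k : ℕ) with hlt | heq | hgt
    · exact hVF j k hlt (internalProj_mem hV j x)
    · have hjk : j = k := Fin.ext heq
      subst hjk
      have : internalProj hV j x = 0 :=
        LinearMap.mem_ker.mp (LinearMap.le_ker_iff_map.mpr hmap hxU)
      rw [this]; exact Submodule.zero_mem _
    · have : internalProj hV j x = 0 :=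
        LinearMap.mem_ker.mp (hker ((k : ℕ) + 1) j hgt hxF)
      rw [this]; exact Submodule.zero_mem _
  -- claim B
  have hB : ∀ (i : Fin n) (k : ℕ),
      d (U i) (k + 1) - d (U i) k ≤ d W (k + 1) - d W k := by
    intro i k
    let A := U i ⊓ F (k + 1)
    let B := W ⊓ F k
    have h1 : Module.finrank 𝔽 ↥(A ⊔ B) + Module.finrank 𝔽 ↥(A ⊓ B)
        = Module.finrank 𝔽 ↥A + Module.finrank 𝔽 ↥B :=
      Submodule.finrank_sup_add_finrank_inf_eq A B
    have hAB : A ⊓ B = U i ⊓ F k := by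
      apply le_antisymm
      · exact le_inf (inf_le_left.trans inf_le_left) (inf_le_right.trans inf_le_right)
      · exact le_inf (le_inf inf_le_left (inf_le_right.trans (hFmono (Nat.le_succ k))))
          (le_inf (inf_le_left.trans (hUW i)) inf_le_right)
    have hsup : A ⊔ B ≤ W ⊓ F (k + 1) :=
      sup_le (le_inf (inf_le_left.trans (hUW i)) inf_le_right)
        (le_inf inf_le_left (inf_le_right.trans (hFmono (Nat.le_succ k))))
    have h2 : Module.finrank 𝔽 ↥(A ⊔ B) ≤ d W (k + 1) :=
      Submodule.finrank_mono hsup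
    rw [hAB] at h1
    have h3 := hdmono W (Nat.le_succ k)
    have h4 := hdmono (U i) (Nat.le_succ k)
    simp only [hd, A, B, Nat.succ_eq_add_one] at h1 h2 h3 h4 ⊢
    omega
  -- zero contribution
  have hZ : ∀ (i : Fin n) (k : Fin t), (U i).map (internalProj hV k) = ⊥ →
      d (U i) ((k : ℕ) + 1) - d (U i) k = 0 := by
    intro i k hmap
    show Module.finrank 𝔽 ↥(U i ⊓ F ((k : ℕ) + 1)) - Module.finrank 𝔽 ↥(U i ⊓ F (k : ℕ)) = 0
    rw [hA i k hmap, Nat.sub_self]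
  -- per-k sum bound
  have hsum : ∀ k ∈ Finset.range t,
      ∑ i, (d (U i) (k + 1) - d (U i) k) ≤ c * (d W (k + 1) - d W k) := by
    intro k hk
    rw [Finset.mem_range] at hk
    set kf : Fin t := ⟨k, hk⟩
    set s : Finset (Fin n) := Finset.univ.filter
      (fun i => (U i).map (internalProj hV kf) ≠ ⊥) with hs
    have hcard : s.card ≤ c := by
      have := hc kf
      have hh : ({i : Fin n | (U i).map (internalProj hV kf) ≠ ⊥}).ncard = s.card := by
        rw [← Set.ncard_coe_finset]
        congr 1
        ext i
        simp [hs]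
      omega
    calc ∑ i, (d (U i) (k + 1) - d (U i) k)
        = ∑ i ∈ s, (d (U i) (k + 1) - d (U i) k) := by
          refine (Finset.sum_subset (Finset.subset_univ s) fun i _ hi => ?_).symm
          simp only [hs, Finset.mem_filter, Finset.mem_univ, true_and, not_not] at hi
          exact hZ i kf hi
      _ ≤ ∑ _i ∈ s, (d W (k + 1) - d W k) := Finset.sum_le_sum fun i _ => hB i k
      _ = s.card * (d W (k + 1) - d W k) := by rw [Finset.sum_const, smul_eq_mul]
      _ ≤ c * (d W (k + 1) - d W k) := Nat.mul_le_mul_right _ hcard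
  have tele : ∀ X : Submodule 𝔽 M,
      ∑ k ∈ Finset.range t, (d X (k + 1) - d X k) = Module.finrank 𝔽 X := by
    intro X
    rw [Finset.sum_range_tsub (hdmono X), hd0, hdt, Nat.sub_zero]
  calc ∑ i, Module.finrank 𝔽 (U i)
      = ∑ i, ∑ k ∈ Finset.range t, (d (U i) (k + 1) - d (U i) k) := by
        refine Finset.sum_congr rfl fun i _ => (tele (U i)).symm
    _ = ∑ k ∈ Finset.range t, ∑ i, (d (U i) (k + 1) - d (U i) k) := Finset.sum_comm
    _ ≤ ∑ k ∈ Finset.range t, c * (d W (k + 1) - d W k) := Finset.sum_le_sum hsum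
    _ = c * ∑ k ∈ Finset.range t, (d W (k + 1) - d W k) := by rw [Finset.mul_sum]
    _ = c * Module.finrank 𝔽 ↥W := by rw [tele W]
end
end
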